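/- arXiv:math/0510671 — 2 statements merged into one kernel-verified Lean document; each statement's English description precedes it below -/
import Mathlib

section
/- Let u be a plurisubharmonic function on the unit ball B of ℂ² that is radial in the first variable, u(|z|,w) = u(z,w), and suppose the Lelong number of u at the origin is 0. Then for every point y = (y₁,y₂) ∈ B with y₁·y₂ ≠ 0, the Lelong number at 0 of the slice ζ ↦ u(ζy₁, ζy₂) is 0. -/
open Complex Metric MeasureTheory Real Filter Topology Set
open scoped ENNReal

noncomputable section

/-- Extended-real logarithm of the modulus: `log ‖z‖`, with value `⊥` at `z = 0`. -/
def elog (z : ℂ) : EReal := if z = 0 then ⊥ else ((Real.log ‖z‖ : ℝ) : EReal)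

/-- Truncation of an extended real to `ℝ≥0∞`. -/
def erealToENN (x : EReal) : ℝ≥0∞ := if x = ⊤ then ⊤ else ENNReal.ofReal x.toReal

/-- Integral over a circle of an `EReal`-valued function, as an extended real:
positive part minus negative part. -/
def circleInt (u : ℂ → EReal) (c : ℂ) (r : ℝ) : EReal :=
  ((∫⁻ θ in Set.Ioc (0:ℝ) (2*π), erealToENN (u (c + r * Complex.exp (θ * Complex.I)))) : ℝ≥0∞).toEReal
  - ((∫⁻ θ in Set.Ioc (0:ℝ) (2*π), erealToENN (-(u (c + r * Complex.exp (θ * Complex.I))))) : ℝ≥0∞).toEReal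

/-- `u : ℂ → ℝ ∪ {-∞}` is subharmonic on `s`: upper semicontinuous on `s` and satisfying the
sub-mean value inequality on all circles whose closed disc lies in `s`. -/
def SubharmonicOn (u : ℂ → EReal) (s : Set ℂ) : Prop :=
  UpperSemicontinuousOn u s ∧
  ∀ c : ℂ, ∀ r : ℝ, 0 < r → closedBall c r ⊆ s →
    ((2*π : ℝ) : EReal) * u c ≤ circleInt u c r

/-- Plurisubharmonicity on `s ⊆ ℂ × ℂ`: upper semicontinuous and subharmonic along every
complex line. -/
def PSH2On (u : ℂ × ℂ → EReal) (s : Set (ℂ × ℂ)) : Prop :=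
  UpperSemicontinuousOn u s ∧
  ∀ a b : ℂ × ℂ, ∀ c : ℂ, ∀ r : ℝ, 0 < r →
    (∀ ζ ∈ closedBall c r, a + ζ • b ∈ s) →
    ((2*π : ℝ) : EReal) * u (a + c • b) ≤ circleInt (fun ζ => u (a + ζ • b)) c r

/-- Plurisubharmonicity on `s ⊆ ℂⁿ`. -/
def PSHPiOn {n : ℕ} (u : (Fin n → ℂ) → EReal) (s : Set (Fin n → ℂ)) : Prop :=
  UpperSemicontinuousOn u s ∧
  ∀ a b : Fin n → ℂ, ∀ c : ℂ, ∀ r : ℝ, 0 < r →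
    (∀ ζ ∈ closedBall c r, a + ζ • b ∈ s) →
    ((2*π : ℝ) : EReal) * u (a + c • b) ≤ circleInt (fun ζ => u (a + ζ • b)) c r

/-- Supremum of `u` over the closed ball of radius `r` about `x`. -/
def supBall (u : ℂ → EReal) (x : ℂ) (r : ℝ) : EReal := ⨆ z ∈ closedBall x r, u z

/-- The Lelong number of a one-variable function at `x` is `ℓ`:
`lim_{r→0} (sup_{|z-x|≤r} u)/log r = ℓ`. -/
def HasLelong (u : ℂ → EReal) (x : ℂ) (ℓ : ℝ) : Prop :=
  Tendsto (fun r : ℝ => (supBall u x r).toReal / Real.log r) (𝓝[>] 0) (𝓝 ℓ)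

/-- Laplacian of a smooth test function. -/
def lapl (φ : ℂ → ℝ) (z : ℂ) : ℝ :=
  fderiv ℝ (fun w => fderiv ℝ φ w 1) z 1 + fderiv ℝ (fun w => fderiv ℝ φ w Complex.I) z Complex.I

/-- `μ` is the distributional Laplacian (Riesz measure) of `u` on `s`. -/
def IsLaplacianMeasure (u : ℂ → EReal) (μ : Measure ℂ) (s : Set ℂ) : Prop :=
  ∀ φ : ℂ → ℝ, ContDiff ℝ (⊤ : ℕ∞) φ → HasCompactSupport φ → tsupport φ ⊆ s →
    ∫ z, (u z).toReal * lapl φ z = ∫ z, φ z ∂μ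

/-- `μ` is the distributional Laplacian (Riesz measure) of the real-valued `u` on `s`. -/
def IsLaplacianMeasureR (u : ℂ → ℝ) (μ : Measure ℂ) (s : Set ℂ) : Prop :=
  ∀ φ : ℂ → ℝ, ContDiff ℝ (⊤ : ℕ∞) φ → HasCompactSupport φ → tsupport φ ⊆ s →
    ∫ z, u z * lapl φ z = ∫ z, φ z ∂μ

end

section P1
open Complex Metric MeasureTheory Real Filter Topology Set
open scoped ENNReal
namespace SliceAux

lemma erealToENN_mono : Monotone erealToENN := by
  intro x y hxy
  unfold erealToENN
  rcases eq_or_ne y ⊤ with hy | hy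
  · simp [hy]
  · have hx : x ≠ ⊤ := fun h => hy (top_le_iff.1 (h ▸ hxy))
    simp only [hx, hy, if_false]
    rcases eq_or_ne x ⊥ with hb | hb
    · simp [hb]
    · exact ENNReal.ofReal_le_ofReal (EReal.toReal_le_toReal hxy hb hy)

lemma erealToENN_coe (x : ℝ) : erealToENN (x : EReal) = ENNReal.ofReal x := by
  simp [erealToENN, EReal.coe_ne_top]

lemma erealToENN_ne_top {x : EReal} (h : x ≠ ⊤) : erealToENN x ≠ ⊤ := by
  simp [erealToENN, h]

lemma measurable_erealToENN : Measurable erealToENN := by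
  unfold erealToENN
  apply Measurable.ite
  · have : {a : EReal | a = ⊤} = {(⊤ : EReal)} := by ext x; simp
    rw [this]; exact measurableSet_singleton _
  · exact measurable_const
  · exact ENNReal.measurable_ofReal.comp measurable_ereal_toReal

end SliceAux

end P1
section Part2
open Complex Metric MeasureTheory Real Filter Topology Set
open scoped ENNReal
namespace SliceAux

lemma usc_comp {β : Type*} [TopologicalSpace β] {f : β → EReal} {s : Set β}
    (hf : UpperSemicontinuousOn f s) {α : Type*} [TopologicalSpace α] {φ : α → β}
    (hφ : Continuous φ) {t : Set α} (hmap : ∀ x ∈ t, φ x ∈ s) :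
    UpperSemicontinuousOn (fun x => f (φ x)) t := by
  intro x hx y hy
  have h1 := hf (φ x) (hmap x hx) y hy
  have h2 : Filter.Tendsto φ (nhdsWithin x t) (nhdsWithin (φ x) s) := by
    apply tendsto_nhdsWithin_of_tendsto_nhds_of_eventually_within
    · exact (hφ.tendsto x).mono_left nhdsWithin_le_nhds
    · exact eventually_nhdsWithin_of_forall hmap
  exact h2.eventually h1

lemma usc_measurable {g : ℝ → EReal} (h : UpperSemicontinuous g) : Measurable g := by
  apply measurable_of_Iio
  intro x
  exact (upperSemicontinuous_iff_isOpen_preimage.1 h x).measurableSet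

lemma usc_isClosed {α : Type*} [TopologicalSpace α] (f : α → EReal) (K : Set α)
    (hK : IsClosed K) (hf : UpperSemicontinuousOn f K) (a : EReal) :
    IsClosed {z ∈ K | a ≤ f z} := by
  apply isClosed_of_closure_subset
  intro x hx
  have hxK : x ∈ K := hK.closure_subset (closure_mono (fun z hz => hz.1) hx)
  refine ⟨hxK, ?_⟩
  by_contra h
  push_neg at h
  have hev : ∀ᶠ w in nhdsWithin x K, f w < a := hf x hxK a h
  have hev' : ∀ᶠ w in nhdsWithin x {z ∈ K | a ≤ f z}, f w < a :=
    hev.filter_mono (nhdsWithin_mono x (fun z hz => hz.1))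
  have hne : (nhdsWithin x {z ∈ K | a ≤ f z}).NeBot := mem_closure_iff_nhdsWithin_neBot.1 hx
  obtain ⟨w, hw1, hw2⟩ := (hev'.and eventually_mem_nhdsWithin).exists
  exact absurd hw2.2 (not_le.2 hw1)

lemma usc_exists_max {α : Type*} [TopologicalSpace α] [T2Space α] {K : Set α} (hK : IsCompact K)
    (hne : K.Nonempty) {f : α → EReal} (hf : UpperSemicontinuousOn f K) :
    ∃ z₀ ∈ K, ∀ z ∈ K, f z ≤ f z₀ := by
  set M := ⨆ z ∈ K, f z with hM
  have hle : ∀ z ∈ K, f z ≤ M := fun z hz => le_biSup f hz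
  rcases eq_or_ne M ⊥ with h | h
  · obtain ⟨z₀, hz₀⟩ := hne
    exact ⟨z₀, hz₀, fun z hz => (hle z hz).trans (h ▸ bot_le)⟩
  · haveI : Nonempty {a : EReal // a < M} := ⟨⟨⊥, bot_lt_iff_ne_bot.2 h⟩⟩
    set Z : {a : EReal // a < M} → Set α := fun a => {z ∈ K | a.1 ≤ f z} with hZ
    have hdir : Directed (· ⊇ ·) Z := by
      intro a b
      refine ⟨⟨max a.1 b.1, max_lt a.2 b.2⟩, fun z hz => ⟨hz.1, (le_max_left _ _).trans hz.2⟩,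
        fun z hz => ⟨hz.1, (le_max_right _ _).trans hz.2⟩⟩
    have hZne : ∀ a, (Z a).Nonempty := by
      intro a
      have h2 : a.1 < ⨆ z ∈ K, f z := a.2
      simp only [lt_iSup_iff] at h2
      obtain ⟨z, hzK, hzlt⟩ := h2
      exact ⟨z, hzK, hzlt.le⟩
    have hZcl : ∀ a, IsClosed (Z a) := fun a => usc_isClosed f K hK.isClosed hf a.1
    have hZcpt : ∀ a, IsCompact (Z a) := fun a => hK.of_isClosed_subset (hZcl a) (fun z hz => hz.1)
    obtain ⟨z₀, hz₀⟩ :=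
      IsCompact.nonempty_iInter_of_directed_nonempty_isCompact_isClosed Z hdir hZne hZcpt hZcl
    have hz₀K : z₀ ∈ K := (mem_iInter.1 hz₀ ⟨⊥, bot_lt_iff_ne_bot.2 h⟩).1
    refine ⟨z₀, hz₀K, fun z hz => ?_⟩
    refine (hle z hz).trans ?_
    by_contra hlt
    push_neg at hlt
    obtain ⟨c, hc1, hc2⟩ := exists_between hlt
    exact absurd (mem_iInter.1 hz₀ ⟨c, hc2⟩).2 (not_le.2 hc1)

end SliceAux
end Part2
section Part3
open Complex Metric MeasureTheory Real Filter Topology Set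
open scoped ENNReal
namespace SliceAux

lemma toReal_ofReal_max (x : ℝ) : (ENNReal.ofReal x).toReal = max x 0 := by
  rcases le_or_gt 0 x with h | h
  · rw [ENNReal.toReal_ofReal h, max_eq_left h]
  · rw [ENNReal.ofReal_of_nonpos h.le, max_eq_right h.le]; simp

lemma coe_toEReal_of_ne_top {x : ℝ≥0∞} (h : x ≠ ⊤) : (x : EReal) = ((x.toReal : ℝ) : EReal) := by
  conv_lhs => rw [← ENNReal.ofReal_toReal h]
  rw [EReal.coe_ennreal_ofReal, max_eq_left ENNReal.toReal_nonneg]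

lemma key_ae (f : ℂ → EReal) (z : ℂ) (ρ : ℝ) (M : ℝ)
    (hmeas : Measurable fun θ : ℝ => f (z + ρ * Complex.exp (θ * Complex.I)))
    (hle : ∀ θ : ℝ, f (z + ρ * Complex.exp (θ * Complex.I)) ≤ (M : EReal))
    (hsm : ((2*π : ℝ) : EReal) * (M : EReal) ≤ circleInt f z ρ)
    (ε : ℝ) (hε : 0 < ε) :
    MeasureTheory.volume {θ ∈ Set.Ioc (0:ℝ) (2*π) |
      f (z + ρ * Complex.exp (θ * Complex.I)) ≤ ((M - ε : ℝ) : EReal)} = 0 := by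
  set g : ℝ → EReal := fun θ => f (z + ρ * Complex.exp (θ * Complex.I)) with hg
  set I : Set ℝ := Set.Ioc (0:ℝ) (2*π) with hI
  set A : Set ℝ := {θ ∈ I | g θ ≤ ((M - ε : ℝ) : EReal)} with hA
  have hImeas : MeasurableSet I := measurableSet_Ioc
  have hAeq : A = I ∩ g ⁻¹' (Set.Iic ((M - ε : ℝ) : EReal)) := rfl
  have hAmeas : MeasurableSet A := by
    rw [hAeq]; exact hImeas.inter (hmeas measurableSet_Iic)
  have hAI : A ⊆ I := fun θ hθ => hθ.1
  set P : ℝ≥0∞ := ∫⁻ θ in I, erealToENN (g θ) with hP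
  set N : ℝ≥0∞ := ∫⁻ θ in I, erealToENN (-g θ) with hN
  have hcirc : circleInt f z ρ = (P : EReal) - (N : EReal) := rfl
  have hgmeas : Measurable fun θ => erealToENN (g θ) := measurable_erealToENN.comp hmeas
  have hgmeas' : Measurable fun θ => erealToENN (-g θ) := measurable_erealToENN.comp hmeas.neg
  have hIvol : MeasureTheory.volume I = ENNReal.ofReal (2*π) := by
    rw [hI, Real.volume_Ioc]; norm_num
  have hIfin : MeasureTheory.volume I ≠ ⊤ := by rw [hIvol]; exact ENNReal.ofReal_ne_top
  have hAfin : MeasureTheory.volume A ≠ ⊤ := fun h =>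
    hIfin (top_le_iff.1 (h ▸ measure_mono hAI))
  -- P is finite
  have hPle : P ≤ ENNReal.ofReal M * ENNReal.ofReal (2*π) := by
    calc P ≤ ∫⁻ _ in I, ENNReal.ofReal M := by
          refine setLIntegral_mono measurable_const (fun θ _ => ?_)
          have h1 := erealToENN_mono (hle θ)
          rwa [erealToENN_coe] at h1
      _ = ENNReal.ofReal M * MeasureTheory.volume I := setLIntegral_const _ _
      _ = _ := by rw [hIvol]
  have hPfin : P ≠ ⊤ := fun h =>
    (ENNReal.mul_ne_top ENNReal.ofReal_ne_top ENNReal.ofReal_ne_top) (top_le_iff.1 (h ▸ hPle))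
  -- N is finite
  have hNfin : N ≠ ⊤ := by
    intro h
    rw [hcirc, h, EReal.coe_ennreal_top, EReal.sub_top] at hsm
    exact (EReal.coe_ne_bot _) (le_bot_iff.1 ((EReal.coe_mul (2*π) M) ▸ hsm))
  -- split I into A and I \ A
  have hsplit : I = A ∪ (I \ A) := (Set.union_diff_cancel hAI).symm
  have hdiffmeas : MeasurableSet (I \ A) := hImeas.diff hAmeas
  have hdisj : Disjoint A (I \ A) := Set.disjoint_sdiff_right
  have hvol_diff : MeasureTheory.volume (I \ A) =
      MeasureTheory.volume I - MeasureTheory.volume A :=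
    measure_diff hAI hAmeas.nullMeasurableSet hAfin
  -- bounds
  have hPsplit : P = (∫⁻ θ in A, erealToENN (g θ)) + ∫⁻ θ in (I \ A), erealToENN (g θ) := by
    rw [hP]; conv_lhs => rw [hsplit]
    exact lintegral_union hdiffmeas hdisj
  have hNsplit : N = (∫⁻ θ in A, erealToENN (-g θ)) + ∫⁻ θ in (I \ A), erealToENN (-g θ) := by
    rw [hN]; conv_lhs => rw [hsplit]
    exact lintegral_union hdiffmeas hdisj
  have hPA : (∫⁻ θ in A, erealToENN (g θ)) ≤ ENNReal.ofReal (M - ε) * MeasureTheory.volume A := by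
    calc (∫⁻ θ in A, erealToENN (g θ)) ≤ ∫⁻ _ in A, ENNReal.ofReal (M - ε) := by
          refine setLIntegral_mono measurable_const (fun θ hθ => ?_)
          have h1 := erealToENN_mono hθ.2
          rwa [erealToENN_coe] at h1
      _ = _ := setLIntegral_const _ _
  have hPB : (∫⁻ θ in (I \ A), erealToENN (g θ)) ≤
      ENNReal.ofReal M * MeasureTheory.volume (I \ A) := by
    calc (∫⁻ θ in (I \ A), erealToENN (g θ)) ≤ ∫⁻ _ in (I \ A), ENNReal.ofReal M := by
          refine setLIntegral_mono measurable_const (fun θ _ => ?_)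
          have h1 := erealToENN_mono (hle θ)
          rwa [erealToENN_coe] at h1
      _ = _ := setLIntegral_const _ _
  have hNA : ENNReal.ofReal (ε - M) * MeasureTheory.volume A ≤
      ∫⁻ θ in A, erealToENN (-g θ) := by
    calc ENNReal.ofReal (ε - M) * MeasureTheory.volume A
        = ∫⁻ _ in A, ENNReal.ofReal (ε - M) := (setLIntegral_const _ _).symm
      _ ≤ _ := by
          refine setLIntegral_mono hgmeas' (fun θ hθ => ?_)
          have h2 : ((ε - M : ℝ) : EReal) ≤ -g θ := by
            have := EReal.neg_le_neg_iff.2 hθ.2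
            rw [← EReal.coe_neg] at this
            convert this using 2
            ring
          have h1 := erealToENN_mono h2
          rwa [erealToENN_coe] at h1
  have hNB : ENNReal.ofReal (-M) * MeasureTheory.volume (I \ A) ≤
      ∫⁻ θ in (I \ A), erealToENN (-g θ) := by
    calc ENNReal.ofReal (-M) * MeasureTheory.volume (I \ A)
        = ∫⁻ _ in (I \ A), ENNReal.ofReal (-M) := (setLIntegral_const _ _).symm
      _ ≤ _ := by
          refine setLIntegral_mono hgmeas' (fun θ _ => ?_)
          have h2 : ((-M : ℝ) : EReal) ≤ -g θ := by
            have := EReal.neg_le_neg_iff.2 (hle θ)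
            rwa [← EReal.coe_neg] at this
          have h1 := erealToENN_mono h2
          rwa [erealToENN_coe] at h1
  -- convert hsm to reals
  have hsmR : 2*π*M ≤ P.toReal - N.toReal := by
    rw [hcirc, coe_toEReal_of_ne_top hPfin, coe_toEReal_of_ne_top hNfin] at hsm
    rw [← EReal.coe_sub, ← EReal.coe_mul] at hsm
    exact EReal.coe_le_coe_iff.1 hsm
  -- real quantities
  set a : ℝ := (MeasureTheory.volume A).toReal with ha
  set b : ℝ := (MeasureTheory.volume (I \ A)).toReal with hb
  have hafin := hAfin
  have hbfin : MeasureTheory.volume (I \ A) ≠ ⊤ := fun h =>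
    hIfin (top_le_iff.1 (h ▸ measure_mono Set.diff_subset))
  have hab : a + b = 2*π := by
    rw [ha, hb, ← ENNReal.toReal_add hAfin hbfin]
    rw [← measure_union hdisj hdiffmeas, ← hsplit, hIvol,
      ENNReal.toReal_ofReal (by positivity)]
  have ha0 : 0 ≤ a := ENNReal.toReal_nonneg
  have hb0 : 0 ≤ b := ENNReal.toReal_nonneg
  -- toReal bounds
  have hPtoReal : P.toReal ≤ (max (M - ε) 0) * a + (max M 0) * b := by
    have h1 : P ≤ ENNReal.ofReal (M - ε) * MeasureTheory.volume A +
        ENNReal.ofReal M * MeasureTheory.volume (I \ A) := by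
      rw [hPsplit]; exact add_le_add hPA hPB
    have h2 := ENNReal.toReal_mono (by
      exact ENNReal.add_ne_top.2 ⟨ENNReal.mul_ne_top ENNReal.ofReal_ne_top hAfin,
        ENNReal.mul_ne_top ENNReal.ofReal_ne_top hbfin⟩) h1
    rwa [ENNReal.toReal_add (ENNReal.mul_ne_top ENNReal.ofReal_ne_top hAfin)
      (ENNReal.mul_ne_top ENNReal.ofReal_ne_top hbfin),
      ENNReal.toReal_mul, ENNReal.toReal_mul, toReal_ofReal_max, toReal_ofReal_max] at h2
  have hNtoReal : (max (ε - M) 0) * a + (max (-M) 0) * b ≤ N.toReal := by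
    have h1 : ENNReal.ofReal (ε - M) * MeasureTheory.volume A +
        ENNReal.ofReal (-M) * MeasureTheory.volume (I \ A) ≤ N := by
      rw [hNsplit]; exact add_le_add hNA hNB
    have h2 := ENNReal.toReal_mono hNfin h1
    rwa [ENNReal.toReal_add (ENNReal.mul_ne_top ENNReal.ofReal_ne_top hAfin)
      (ENNReal.mul_ne_top ENNReal.ofReal_ne_top hbfin),
      ENNReal.toReal_mul, ENNReal.toReal_mul, toReal_ofReal_max, toReal_ofReal_max] at h2
  -- combine
  have hcomb : 2*π*M ≤ (M - ε) * a + M * b := by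
    have h3 : P.toReal - N.toReal ≤
        ((max (M - ε) 0) * a + (max M 0) * b) - ((max (ε - M) 0) * a + (max (-M) 0) * b) := by
      linarith
    have h4 : ((max (M - ε) 0) * a + (max M 0) * b) -
        ((max (ε - M) 0) * a + (max (-M) 0) * b) = (M - ε) * a + M * b := by
      have e1 : max (M - ε) 0 - max (ε - M) 0 = M - ε := by
        have := max_zero_sub_max_neg_zero_eq_self (M - ε)
        rwa [neg_sub] at this
      have e2 : max M 0 - max (-M) 0 = M := max_zero_sub_max_neg_zero_eq_self M
      nlinarith [e1, e2]
    linarith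
  -- conclude a = 0
  have hb' : b = 2*π - a := by linarith
  have hrw : (M - ε)*a + M*b = 2*π*M - ε*a := by rw [hb']; ring
  have hεa : ε * a ≤ 0 := by linarith
  have haz : a = 0 := by
    by_contra hne
    have hapos : 0 < a := lt_of_le_of_ne ha0 (Ne.symm hne)
    exact absurd hεa (not_le.2 (mul_pos hε hapos))
  rw [ha] at haz
  rcases (ENNReal.toReal_eq_zero_iff _).1 haz with h | h
  · exact h
  · exact absurd h hAfin

lemma key_lt (f : ℂ → EReal) (z : ℂ) (ρ : ℝ) (M : ℝ)
    (hmeas : Measurable fun θ : ℝ => f (z + ρ * Complex.exp (θ * Complex.I)))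
    (hle : ∀ θ : ℝ, f (z + ρ * Complex.exp (θ * Complex.I)) ≤ (M : EReal))
    (hsm : ((2*π : ℝ) : EReal) * (M : EReal) ≤ circleInt f z ρ) :
    MeasureTheory.volume {θ ∈ Set.Ioc (0:ℝ) (2*π) |
      f (z + ρ * Complex.exp (θ * Complex.I)) < (M : EReal)} = 0 := by
  set g : ℝ → EReal := fun θ => f (z + ρ * Complex.exp (θ * Complex.I)) with hg
  have hsub : {θ ∈ Set.Ioc (0:ℝ) (2*π) | g θ < (M : EReal)} ⊆
      ⋃ n : ℕ, {θ ∈ Set.Ioc (0:ℝ) (2*π) | g θ ≤ ((M - 1/(n+1) : ℝ) : EReal)} := by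
    rintro θ ⟨hθI, hθ⟩
    rcases eq_or_ne (g θ) ⊥ with hb | hb
    · exact Set.mem_iUnion.2 ⟨0, hθI, by rw [hb]; exact bot_le⟩
    · have htop : g θ ≠ ⊤ := hθ.ne_top
      have hlt : (g θ).toReal < M := by
        have h1 : ((g θ).toReal : EReal) = g θ := EReal.coe_toReal htop hb
        have := h1 ▸ hθ
        exact_mod_cast this
      obtain ⟨n, hn⟩ := exists_nat_one_div_lt (by linarith : 0 < M - (g θ).toReal)
      refine Set.mem_iUnion.2 ⟨n, hθI, ?_⟩
      have h1 : ((g θ).toReal : EReal) = g θ := EReal.coe_toReal htop hb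
      rw [← h1]
      have : (g θ).toReal ≤ M - 1/(n+1) := by
        have : (1 : ℝ)/(n+1) < M - (g θ).toReal := by exact_mod_cast hn
        linarith
      exact_mod_cast this
  refine measure_mono_null hsub (measure_iUnion_null fun n => ?_)
  exact key_ae f z ρ M hmeas hle hsm (1/(n+1)) (by positivity)

end SliceAux
end Part3
section Part4
open Complex Metric MeasureTheory Real Filter Topology Set
open scoped ENNReal
namespace SliceAux

lemma norm_circle_pt (z : ℂ) (ρ : ℝ) (hρ : 0 ≤ ρ) (θ : ℝ) :
    dist (z + ρ * Complex.exp (θ * Complex.I)) z = ρ := by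
  rw [dist_eq_norm]
  simp only [add_sub_cancel_left]
  rw [norm_mul, Complex.norm_real,
    Complex.norm_exp_ofReal_mul_I, mul_one, Real.norm_eq_abs, _root_.abs_of_nonneg hρ]

lemma exists_angle (c w : ℂ) (h : w ≠ c) :
    ∃ θ ∈ Set.Ioc (0:ℝ) (2*π), c + (‖w - c‖ : ℝ) * Complex.exp (θ * Complex.I) = w := by
  set d := w - c with hd
  have hdne : d ≠ 0 := sub_ne_zero.2 h
  have habs : ((‖d‖ : ℝ) : ℂ) * Complex.exp (Complex.arg d * Complex.I) = d :=
    Complex.norm_mul_exp_arg_mul_I d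
  have hnorm : (‖d‖ : ℝ) = ‖d‖ := rfl
  rcases le_or_gt (Complex.arg d) 0 with harg | harg
  · refine ⟨Complex.arg d + 2*π, ⟨?_, ?_⟩, ?_⟩
    · have := Complex.neg_pi_lt_arg d
      have hπ := Real.pi_pos
      linarith
    · linarith
    · have hexp : Complex.exp (((Complex.arg d + 2*π : ℝ) : ℂ) * Complex.I) =
          Complex.exp ((Complex.arg d : ℝ) * Complex.I) := by
        push_cast
        rw [add_mul, Complex.exp_add, Complex.exp_two_pi_mul_I, mul_one]
      rw [hexp, hnorm, habs]
      ring
  · refine ⟨Complex.arg d, ⟨harg, ?_⟩, ?_⟩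
    · have := Complex.arg_le_pi d
      have hπ := Real.pi_pos
      linarith
    · rw [hnorm, habs]; ring

lemma circleInt_lt_top {g : ℂ → EReal} {ρ : ℝ} (hρ : 0 < ρ) {K : ℝ}
    (hbd : ∀ θ : ℝ, g ((0:ℂ) + ρ * Complex.exp (θ * Complex.I)) ≤ (K : EReal)) :
    circleInt g 0 ρ < ⊤ := by
  have hP : (∫⁻ θ in Set.Ioc (0:ℝ) (2*π),
      erealToENN (g ((0:ℂ) + ρ * Complex.exp (θ * Complex.I)))) ≤
      ENNReal.ofReal K * MeasureTheory.volume (Set.Ioc (0:ℝ) (2*π)) := by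
    calc _ ≤ ∫⁻ _ in Set.Ioc (0:ℝ) (2*π), ENNReal.ofReal K := by
          refine setLIntegral_mono measurable_const (fun θ _ => ?_)
          have h1 := erealToENN_mono (hbd θ)
          rwa [erealToENN_coe] at h1
      _ = _ := setLIntegral_const _ _
  have hPfin : (∫⁻ θ in Set.Ioc (0:ℝ) (2*π),
      erealToENN (g ((0:ℂ) + ρ * Complex.exp (θ * Complex.I)))) ≠ ⊤ := by
    intro htop
    rw [htop] at hP
    exact (ENNReal.mul_ne_top ENNReal.ofReal_ne_top
      (by rw [Real.volume_Ioc]; exact ENNReal.ofReal_ne_top)) (top_le_iff.1 hP)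
  unfold circleInt
  refine lt_of_le_of_lt (?_ : _ ≤ ((∫⁻ θ in Set.Ioc (0:ℝ) (2*π),
      erealToENN (g ((0:ℂ) + ρ * Complex.exp (θ * Complex.I)))) : ℝ≥0∞).toEReal) ?_
  · have hneg : -(((∫⁻ θ in Set.Ioc (0:ℝ) (2*π),
        erealToENN (-(g ((0:ℂ) + ρ * Complex.exp (θ * Complex.I))))) : ℝ≥0∞).toEReal) ≤ 0 := by
      have h0 := EReal.coe_ennreal_nonneg (∫⁻ θ in Set.Ioc (0:ℝ) (2*π),
        erealToENN (-(g ((0:ℂ) + ρ * Complex.exp (θ * Complex.I)))))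
      simpa using EReal.neg_le_neg_iff.2 h0
    calc _ ≤ (((∫⁻ θ in Set.Ioc (0:ℝ) (2*π),
        erealToENN (g ((0:ℂ) + ρ * Complex.exp (θ * Complex.I)))) : ℝ≥0∞).toEReal) + 0 :=
          add_le_add_right hneg _
      _ = _ := add_zero _
  · rw [lt_top_iff_ne_top]
    rw [Ne, EReal.coe_ennreal_eq_top_iff]
    exact hPfin

lemma topSpread (u : ℂ × ℂ → EReal) (hpsh : PSH2On u (ball (0:ℂ × ℂ) 1)) (p b : ℂ × ℂ)
    (ρ : ℝ) (hρ : 0 < ρ)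
    (hdom : ∀ ζ : ℂ, ζ ∈ closedBall (0:ℂ) ρ → p + ζ • b ∈ ball (0:ℂ × ℂ) 1)
    (htop : u p = ⊤) : ∃ ζ : ℂ, ‖ζ‖ = ρ ∧ u (p + ζ • b) = ⊤ := by
  by_contra hcon
  push_neg at hcon
  set g : ℂ → EReal := fun ζ => u (p + ζ • b) with hgdef
  have husc : UpperSemicontinuousOn g (sphere (0:ℂ) ρ) := by
    apply usc_comp hpsh.1
    · exact continuous_const.add (continuous_id.smul continuous_const)
    · intro ζ hζ
      exact hdom ζ (sphere_subset_closedBall hζ)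
  obtain ⟨ζs, hζsmem, hmax⟩ := usc_exists_max (isCompact_sphere (0:ℂ) ρ)
    (NormedSpace.sphere_nonempty.2 hρ.le) husc
  have hζsnorm : ‖ζs‖ = ρ := by rwa [mem_sphere_iff_norm, sub_zero] at hζsmem
  have hgtop : g ζs ≠ ⊤ := hcon ζs hζsnorm
  have hKex : ∃ K : ℝ, ∀ ζ ∈ sphere (0:ℂ) ρ, g ζ ≤ (K : EReal) := by
    rcases eq_or_ne (g ζs) ⊥ with hb | hb
    · exact ⟨0, fun ζ hζ => (hmax ζ hζ).trans (hb ▸ bot_le)⟩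
    · refine ⟨(g ζs).toReal, fun ζ hζ => (hmax ζ hζ).trans ?_⟩
      rw [EReal.coe_toReal hgtop hb]
  obtain ⟨K, hK⟩ := hKex
  have hsub := hpsh.2 p b 0 ρ hρ (by
    intro ζ hζ
    rw [Metric.mem_closedBall, dist_zero_right] at hζ
    exact hdom ζ (by rwa [Metric.mem_closedBall, dist_zero_right]))
  rw [zero_smul, add_zero, htop] at hsub
  rw [EReal.coe_mul_top_of_pos (by positivity)] at hsub
  have hlt : circleInt g 0 ρ < ⊤ := by
    apply circleInt_lt_top hρ (K := K)
    intro θ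
    apply hK
    rw [mem_sphere_iff_norm, sub_zero]
    have := norm_circle_pt 0 ρ hρ.le θ
    rwa [dist_eq_norm, sub_zero] at this
  exact absurd (top_le_iff.1 hsub) hlt.ne

end SliceAux
end Part4
section Part5
open Complex Metric MeasureTheory Real Filter Topology Set
open scoped ENNReal
namespace SliceAux

lemma maxPrinciple (f : ℂ → EReal) (R : ℝ) (hR : 0 < R) (C : ℝ)
    (husc : UpperSemicontinuousOn f (closedBall (0 : ℂ) R))
    (hbd : ∀ z ∈ closedBall (0 : ℂ) R, f z ≤ (C : EReal))
    (hsm : ∀ c : ℂ, ∀ ρ : ℝ, 0 < ρ → closedBall c ρ ⊆ closedBall (0 : ℂ) R →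
      ((2*π : ℝ) : EReal) * f c ≤ circleInt f c ρ)
    (M : EReal) (hM : ∀ z ∈ sphere (0 : ℂ) R, f z ≤ M) :
    ∀ z ∈ closedBall (0 : ℂ) R, f z ≤ M := by
  obtain ⟨z₀, hz₀K, hmax⟩ := usc_exists_max (isCompact_closedBall (0 : ℂ) R)
    ⟨0, mem_closedBall_self hR.le⟩ husc
  by_cases hcase : f z₀ ≤ M
  · exact fun z hz => (hmax z hz).trans hcase
  exfalso
  push_neg at hcase
  have hM'top : f z₀ ≠ ⊤ := by
    intro h
    have h1 := hbd z₀ hz₀K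
    rw [h] at h1
    exact absurd h1 (not_le.2 (EReal.coe_lt_top C))
  have hM'bot : f z₀ ≠ ⊥ := by
    intro h
    rw [h] at hcase
    exact absurd hcase (not_lt.2 bot_le)
  set m : ℝ := (f z₀).toReal with hm
  have hM'eq : f z₀ = ((m : ℝ) : EReal) := (EReal.coe_toReal hM'top hM'bot).symm
  -- measurability of circle restrictions
  have hmeasg : ∀ (z : ℂ) (ρ : ℝ), 0 ≤ ρ → closedBall z ρ ⊆ closedBall (0 : ℂ) R →
      Measurable fun θ : ℝ => f (z + ρ * Complex.exp (θ * Complex.I)) := by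
    intro z ρ hρ hsub
    apply usc_measurable
    rw [← upperSemicontinuousOn_univ_iff]
    apply usc_comp husc
    · exact continuous_const.add (continuous_const.mul
        (Complex.continuous_exp.comp (Complex.continuous_ofReal.mul continuous_const)))
    · intro θ _
      exact hsub (Metric.mem_closedBall.2 (le_of_eq (norm_circle_pt z ρ hρ θ)))
  -- propagation of the maximum
  have hprop : ∀ z, z ∈ ball (0 : ℂ) R → f z₀ ≤ f z →
      ∀ z', z' ∈ ball z (R - ‖z‖) → f z₀ ≤ f z' := by
    intro z hz hfz z' hz'
    rcases eq_or_ne z' z with rfl | hne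
    · exact hfz
    by_contra hcon
    push_neg at hcon
    set ρ : ℝ := ‖z' - z‖ with hρdef
    have hρpos : 0 < ρ := norm_sub_pos_iff.2 hne
    have hzn : ‖z‖ < R := mem_ball_zero_iff.1 hz
    have hρlt : ρ < R - ‖z‖ := by
      have := mem_ball.1 hz'
      rwa [dist_eq_norm] at this
    have hsubK : closedBall z ρ ⊆ closedBall (0 : ℂ) R := by
      intro w hw
      rw [Metric.mem_closedBall] at hw ⊢
      calc dist w 0 ≤ dist w z + dist z 0 := dist_triangle _ _ _
        _ ≤ ρ + ‖z‖ := by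
            rw [dist_zero_right]
            exact add_le_add_left hw _
        _ ≤ R := by linarith
    have hfzeq : f z = f z₀ := le_antisymm (hmax z (ball_subset_closedBall hz)) hfz
    have hsm' := hsm z ρ hρpos hsubK
    rw [hfzeq, hM'eq] at hsm'
    have hlecirc : ∀ θ : ℝ, f (z + ρ * Complex.exp (θ * Complex.I)) ≤ ((m : ℝ) : EReal) := by
      intro θ
      have hmem : z + ρ * Complex.exp (θ * Complex.I) ∈ closedBall (0 : ℂ) R :=
        hsubK (Metric.mem_closedBall.2 (le_of_eq (norm_circle_pt z ρ hρpos.le θ)))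
      exact (hmax _ hmem).trans_eq hM'eq
    have hnull := key_lt f z ρ m (hmeasg z ρ hρpos.le hsubK) hlecirc hsm'
    obtain ⟨θ', hθ'mem, hθ'eq⟩ := exists_angle z z' hne
    have hz'ball : z' ∈ ball (0 : ℂ) R := by
      rw [mem_ball_zero_iff]
      calc ‖z'‖ = ‖(z' - z) + z‖ := by ring_nf
        _ ≤ ‖z' - z‖ + ‖z‖ := norm_add_le _ _
        _ < R := by linarith
    have hlt : f z' < f z₀ := hcon
    have hev : ∀ᶠ w in 𝓝 z', f w < f z₀ := by
      have h1 := husc z' (ball_subset_closedBall hz'ball) (f z₀) hlt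
      have h2 : closedBall (0 : ℂ) R ∈ 𝓝 z' :=
        mem_nhds_iff.2 ⟨ball (0 : ℂ) R, ball_subset_closedBall, isOpen_ball, hz'ball⟩
      rwa [nhdsWithin_eq_nhds.2 h2] at h1
    obtain ⟨η, hη, hball⟩ := Metric.eventually_nhds_iff.1 hev
    have hcont : Continuous fun θ : ℝ => z + (ρ : ℂ) * Complex.exp (θ * Complex.I) :=
      continuous_const.add (continuous_const.mul
        (Complex.continuous_exp.comp (Complex.continuous_ofReal.mul continuous_const)))
    have htendz' : Filter.Tendsto (fun θ : ℝ => z + (ρ : ℂ) * Complex.exp (θ * Complex.I))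
        (𝓝 θ') (𝓝 z') := by
      have := hcont.tendsto θ'
      rwa [hθ'eq] at this
    have hevθ : ∀ᶠ θ : ℝ in 𝓝 θ', dist (z + (ρ : ℂ) * Complex.exp (θ * Complex.I)) z' < η :=
      (Metric.tendsto_nhds.1 htendz') η hη
    obtain ⟨δ, hδpos, hδ⟩ := Metric.eventually_nhds_iff.1 hevθ
    have hθ'pos : 0 < θ' := hθ'mem.1
    set δ' : ℝ := min δ θ' with hδ'def
    have hδ'pos : 0 < δ' := lt_min hδpos hθ'pos
    have hJsub : Set.Ioc (θ' - δ') θ' ⊆ {θ ∈ Set.Ioc (0:ℝ) (2*π) |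
        f (z + ρ * Complex.exp (θ * Complex.I)) < ((m : ℝ) : EReal)} := by
      intro θ hθ
      have hδ'leθ' : δ' ≤ θ' := min_le_right _ _
      have h1 : 0 < θ := by
        have := hθ.1; linarith
      have h2 : θ ≤ 2*π := le_trans hθ.2 hθ'mem.2
      refine ⟨⟨h1, h2⟩, ?_⟩
      have habs : |θ - θ'| < δ' := by
        rw [abs_sub_lt_iff]
        constructor
        · linarith [hθ.2]
        · linarith [hθ.1]
      have hd : dist θ θ' < δ := by
        rw [Real.dist_eq]
        exact lt_of_lt_of_le habs (min_le_left _ _)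
      have h3 := hball (hδ hd)
      rwa [hM'eq] at h3
    have hpos : 0 < MeasureTheory.volume (Set.Ioc (θ' - δ') θ') := by
      rw [Real.volume_Ioc]
      apply ENNReal.ofReal_pos.2
      linarith
    exact hpos.ne' (measure_mono_null hJsub hnull)
  -- openness of the two pieces and connectedness
  have hz₀ball : z₀ ∈ ball (0 : ℂ) R := by
    rcases eq_or_lt_of_le (mem_closedBall.1 hz₀K) with heq | hlt
    · exact absurd (hM z₀ (mem_sphere.2 heq)) (not_le.2 hcase)
    · exact mem_ball.2 hlt
  set E : Set ℂ := {w : ℂ | w ∈ ball (0 : ℂ) R ∧ f z₀ ≤ f w} with hE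
  set U : Set ℂ := {w : ℂ | w ∈ ball (0 : ℂ) R ∧ f w < f z₀} with hU
  have hEopen : IsOpen E := by
    rw [Metric.isOpen_iff]
    intro w hw
    refine ⟨R - ‖w‖, by
      have := mem_ball_zero_iff.1 hw.1; linarith, ?_⟩
    intro w' hw'
    have hw'ball : w' ∈ ball (0 : ℂ) R := by
      rw [mem_ball_zero_iff]
      have h1 : ‖w' - w‖ < R - ‖w‖ := by
        have := mem_ball.1 hw'; rwa [dist_eq_norm] at this
      calc ‖w'‖ = ‖(w' - w) + w‖ := by ring_nf
        _ ≤ ‖w' - w‖ + ‖w‖ := norm_add_le _ _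
        _ < R := by linarith
    exact ⟨hw'ball, hprop w hw.1 hw.2 w' hw'⟩
  have hUopen : IsOpen U := by
    rw [Metric.isOpen_iff]
    intro w hw
    have hev : ∀ᶠ x in 𝓝 w, f x < f z₀ := by
      have h1 := husc w (ball_subset_closedBall hw.1) (f z₀) hw.2
      have h2 : closedBall (0 : ℂ) R ∈ 𝓝 w :=
        mem_nhds_iff.2 ⟨ball (0 : ℂ) R, ball_subset_closedBall, isOpen_ball, hw.1⟩
      rwa [nhdsWithin_eq_nhds.2 h2] at h1
    have hev2 : ∀ᶠ x in 𝓝 w, x ∈ ball (0 : ℂ) R := isOpen_ball.eventually_mem hw.1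
    obtain ⟨η, hη, h⟩ := Metric.eventually_nhds_iff.1 (hev2.and hev)
    exact ⟨η, hη, fun w' hw' => h (mem_ball.1 hw')⟩
  have hcover : ball (0 : ℂ) R ⊆ E ∪ U := by
    intro w hw
    rcases le_or_gt (f z₀) (f w) with h | h
    · exact Or.inl ⟨hw, h⟩
    · exact Or.inr ⟨hw, h⟩
  have hconn : IsPreconnected (ball (0 : ℂ) R) := (convex_ball (0 : ℂ) R).isPreconnected
  by_cases hUne : (ball (0 : ℂ) R ∩ U).Nonempty
  · obtain ⟨w, hw⟩ := hconn E U hEopen hUopen hcover ⟨z₀, hz₀ball, hz₀ball, le_refl _⟩ hUne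
    exact absurd hw.2.2.2 (not_lt.2 hw.2.1.2)
  · have hall : ∀ w ∈ ball (0 : ℂ) R, f z₀ ≤ f w := by
      intro w hw
      by_contra h
      push_neg at h
      exact hUne ⟨w, hw, hw, h⟩
    have hpsph : ((R : ℝ) : ℂ) ∈ sphere (0 : ℂ) R := by
      rw [mem_sphere_iff_norm, sub_zero, Complex.norm_real, Real.norm_eq_abs,
        _root_.abs_of_pos hR]
    have hplt : f ((R : ℝ) : ℂ) < f z₀ := lt_of_le_of_lt (hM _ hpsph) hcase
    have hev := husc ((R : ℝ) : ℂ) (sphere_subset_closedBall hpsph) (f z₀) hplt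
    have hev2 : ∀ᶠ w in 𝓝[ball (0 : ℂ) R] ((R : ℝ) : ℂ), f w < f z₀ :=
      hev.filter_mono (nhdsWithin_mono _ ball_subset_closedBall)
    have hneB : (𝓝[ball (0 : ℂ) R] ((R : ℝ) : ℂ)).NeBot := by
      rw [← mem_closure_iff_nhdsWithin_neBot, closure_ball (0 : ℂ) hR.ne']
      exact sphere_subset_closedBall hpsph
    obtain ⟨w, hw1, hw2⟩ := (hev2.and eventually_mem_nhdsWithin).exists
    exact absurd hw1 (not_lt.2 (hall w hw2))

end SliceAux
end Part5
noncomputable section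
open SliceAux
/-- if `u` is psh on the unit ball of `ℂ²`, radial in the first variable, with
Lelong number `0` at the origin, then every slice through a point `y` with `y₁·y₂ ≠ 0` also
has Lelong number `0` at the origin. -/
theorem slice_lelong_zero_of_radial (u : ℂ × ℂ → EReal)
    (hpsh : PSH2On u (ball (0 : ℂ × ℂ) 1))
    (hrad : ∀ z w : ℂ, (z, w) ∈ ball (0 : ℂ × ℂ) 1 → u (z, w) = u (((‖z‖ : ℝ) : ℂ), w))
    (hν : Tendsto (fun r : ℝ => (⨆ p ∈ closedBall (0 : ℂ × ℂ) r, u p).toReal / Real.log r)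
      (𝓝[>] 0) (𝓝 0))
    (y : ℂ × ℂ) (hy : y ∈ ball (0 : ℂ × ℂ) 1) (hy12 : y.1 * y.2 ≠ 0) :
    HasLelong (fun ζ : ℂ => u (ζ • y)) 0 0 := by
  have hy' : ‖y‖ < 1 := mem_ball_zero_iff.1 hy
  have hy1 : y.1 ≠ 0 := fun h => hy12 (by rw [h, zero_mul])
  have hy2 : y.2 ≠ 0 := fun h => hy12 (by rw [h, mul_zero])
  have hy1n : 0 < ‖y.1‖ := norm_pos_iff.2 hy1
  have hy2n : 0 < ‖y.2‖ := norm_pos_iff.2 hy2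
  have hy1lt : ‖y.1‖ < 1 := lt_of_le_of_lt (norm_fst_le y) hy'
  have hy2lt : ‖y.2‖ < 1 := lt_of_le_of_lt (norm_snd_le y) hy'
  set cc : ℝ := min ‖y.1‖ ‖y.2‖ with hcc
  have hcpos : 0 < cc := lt_min hy1n hy2n
  have hclt1 : cc < 1 := lt_of_le_of_lt (min_le_left _ _) hy1lt
  set S : ℝ → EReal := fun r => ⨆ p ∈ closedBall (0 : ℂ × ℂ) r, u p with hS
  set B : ℝ → EReal := fun r => supBall (fun ζ : ℂ => u (ζ • y)) 0 r with hB
  show Tendsto (fun r : ℝ => (B r).toReal / Real.log r) (𝓝[>] 0) (𝓝 0)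
  have hsmul : ∀ ζ : ℂ, ζ • y = (ζ * y.1, ζ * y.2) := fun ζ => by
    rw [Prod.ext_iff]
    exact ⟨by rw [Prod.smul_fst, smul_eq_mul], by rw [Prod.smul_snd, smul_eq_mul]⟩
  have hnorm_smul : ∀ ζ : ℂ, ‖ζ • y‖ ≤ ‖ζ‖ := fun ζ => by
    rw [norm_smul]
    calc ‖ζ‖ * ‖y‖ ≤ ‖ζ‖ * 1 := mul_le_mul_of_nonneg_left hy'.le (norm_nonneg ζ)
      _ = ‖ζ‖ := mul_one _
  have hBS : ∀ r : ℝ, B r ≤ S r := by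
    intro r
    apply iSup₂_le
    intro ζ hζ
    exact le_biSup u (mem_closedBall_zero_iff.2
      ((hnorm_smul ζ).trans (mem_closedBall_zero_iff.1 hζ)))
  have hSmono : ∀ r r' : ℝ, r ≤ r' → S r ≤ S r' := fun r r' h =>
    biSup_mono (fun p hp => closedBall_subset_closedBall h hp)
  by_cases hP : ∃ r₁ > 0, S r₁ ≠ ⊤
  · obtain ⟨r₁, hr₁pos, hr₁top⟩ := hP
    by_cases hQ : ∃ r₂ > 0, S r₂ = ⊥
    · obtain ⟨r₂, hr₂pos, hr₂bot⟩ := hQ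
      have hev : ∀ᶠ r in 𝓝[>] (0:ℝ), (B r).toReal / Real.log r = 0 := by
        filter_upwards [Ioo_mem_nhdsGT hr₂pos] with r hr
        have h1 : B r ≤ ⊥ := (hBS r).trans ((hSmono r r₂ hr.2.le).trans_eq hr₂bot)
        rw [le_bot_iff.1 h1]
        simp
      exact Tendsto.congr' (hev.mono fun r h => h.symm) tendsto_const_nhds
    · push_neg at hQ
      -- the main case
      have hCeq : (((S r₁).toReal : ℝ) : EReal) = S r₁ := EReal.coe_toReal hr₁top (hQ r₁ hr₁pos)
      set C : ℝ := (S r₁).toReal with hCdef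
      have hkey : ∀ r : ℝ, 0 < r → r < r₁ → r < 1 → S (cc * r) ≤ B r := by
        intro r hr0 hrr₁ hr1
        apply iSup₂_le
        intro p hp
        set t : ℝ := r * ‖y.1‖ with ht_def
        set R2 : ℝ := r * ‖y.2‖ with hR2_def
        have ht : 0 < t := mul_pos hr0 hy1n
        have hR2 : 0 < R2 := mul_pos hr0 hy2n
        have htr : t ≤ r := by nlinarith
        have hR2r : R2 ≤ r := by nlinarith
        have hcrt : cc * r ≤ t := by
          rw [ht_def, mul_comm r ‖y.1‖]
          exact mul_le_mul_of_nonneg_right (min_le_left _ _) hr0.le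
        have hcrR : cc * r ≤ R2 := by
          rw [hR2_def, mul_comm r ‖y.2‖]
          exact mul_le_mul_of_nonneg_right (min_le_right _ _) hr0.le
        have hpz : ‖p.1‖ ≤ cc * r := (norm_fst_le p).trans (mem_closedBall_zero_iff.1 hp)
        have hpw : ‖p.2‖ ≤ cc * r := (norm_snd_le p).trans (mem_closedBall_zero_iff.1 hp)
        have hcr_r : cc * r ≤ r := by nlinarith
        have hbd2 : ∀ q : ℂ × ℂ, ‖q‖ ≤ r → u q ≤ (C : EReal) := by
          intro q hq
          rw [hCeq]
          exact le_biSup u (mem_closedBall_zero_iff.2 (hq.trans hrr₁.le))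
        -- step A : max principle in the first variable
        have hstepA : u (p.1, p.2) ≤ u (((t : ℝ) : ℂ), p.2) := by
          have hA := maxPrinciple (fun ζ : ℂ => u (ζ, p.2)) t ht C
            (by
              apply usc_comp hpsh.1
                (Continuous.prodMk continuous_id continuous_const :
                  Continuous fun ζ : ℂ => (ζ, p.2))
              intro ζ hζ
              rw [mem_ball_zero_iff, Prod.norm_def]
              exact max_lt (lt_of_le_of_lt (mem_closedBall_zero_iff.1 hζ)
                (lt_of_le_of_lt htr hr1))
                (lt_of_le_of_lt hpw (lt_of_le_of_lt hcr_r hr1)))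
            (by
              intro ζ hζ
              apply hbd2 (ζ, p.2)
              rw [Prod.norm_def]
              exact max_le ((mem_closedBall_zero_iff.1 hζ).trans htr) (hpw.trans hcr_r))
            (by
              intro c' ρ hρ hsub
              have hcen : ((0:ℂ), p.2) + c' • ((1:ℂ), (0:ℂ)) = (c', p.2) := by
                rw [Prod.ext_iff]; constructor <;> simp
              have hfun : (fun ζ : ℂ => u (((0:ℂ), p.2) + ζ • ((1:ℂ), (0:ℂ)))) =
                  fun ζ : ℂ => u (ζ, p.2) := by
                funext ζ
                congr 1
                rw [Prod.ext_iff]; constructor <;> simp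
              have h2 := hpsh.2 ((0:ℂ), p.2) ((1:ℂ), (0:ℂ)) c' ρ hρ (by
                intro ζ hζ
                have hζ' := hsub hζ
                have : ((0:ℂ), p.2) + ζ • ((1:ℂ), (0:ℂ)) = (ζ, p.2) := by
                  rw [Prod.ext_iff]; constructor <;> simp
                rw [this, mem_ball_zero_iff, Prod.norm_def]
                exact max_lt (lt_of_le_of_lt (mem_closedBall_zero_iff.1 hζ')
                  (lt_of_le_of_lt htr hr1))
                  (lt_of_le_of_lt hpw (lt_of_le_of_lt hcr_r hr1)))
              rw [hcen, hfun] at h2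
              exact h2)
            (u (((t : ℝ) : ℂ), p.2))
            (by
              intro ζ hζ
              have hζt : ‖ζ‖ = t := by
                have := mem_sphere_iff_norm.1 hζ
                rwa [sub_zero] at this
              have hmem : (ζ, p.2) ∈ ball (0 : ℂ × ℂ) 1 := by
                rw [mem_ball_zero_iff, Prod.norm_def]
                exact max_lt (hζt ▸ lt_of_le_of_lt htr hr1)
                  (lt_of_le_of_lt hpw (lt_of_le_of_lt hcr_r hr1))
              show u (ζ, p.2) ≤ u (((t : ℝ) : ℂ), p.2)
              rw [hrad ζ p.2 hmem, hζt])
          exact hA p.1 (mem_closedBall_zero_iff.2 (hpz.trans hcrt))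
        -- step B : max principle in the second variable
        have hstepB : u (((t : ℝ) : ℂ), p.2) ≤ B r := by
          have htnorm : ‖((t : ℝ) : ℂ)‖ = t := by
            rw [Complex.norm_real, Real.norm_eq_abs, _root_.abs_of_pos ht]
          have hBle := maxPrinciple (fun w : ℂ => u (((t : ℝ) : ℂ), w)) R2 hR2 C
            (by
              apply usc_comp hpsh.1
                (Continuous.prodMk continuous_const continuous_id :
                  Continuous fun w : ℂ => (((t : ℝ) : ℂ), w))
              intro w hw
              rw [mem_ball_zero_iff, Prod.norm_def]
              apply max_lt
              · show ‖((t : ℝ) : ℂ)‖ < 1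
                rw [htnorm]; linarith
              · exact lt_of_le_of_lt (mem_closedBall_zero_iff.1 hw)
                  (lt_of_le_of_lt hR2r hr1))
            (by
              intro w hw
              apply hbd2 (((t : ℝ) : ℂ), w)
              rw [Prod.norm_def]
              apply max_le
              · show ‖((t : ℝ) : ℂ)‖ ≤ r
                rw [htnorm]; linarith
              · exact (mem_closedBall_zero_iff.1 hw).trans hR2r)
            (by
              intro c' ρ hρ hsub
              have hcen : ((((t:ℝ):ℂ)), (0:ℂ)) + c' • ((0:ℂ), (1:ℂ)) = (((t:ℝ):ℂ), c') := by
                rw [Prod.ext_iff]; constructor <;> simp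
              have hfun : (fun w : ℂ => u (((((t:ℝ):ℂ)), (0:ℂ)) + w • ((0:ℂ), (1:ℂ)))) =
                  fun w : ℂ => u (((t:ℝ):ℂ), w) := by
                funext w
                congr 1
                rw [Prod.ext_iff]; constructor <;> simp
              have h2 := hpsh.2 ((((t:ℝ):ℂ)), (0:ℂ)) ((0:ℂ), (1:ℂ)) c' ρ hρ (by
                intro w hw
                have hw' := hsub hw
                have : ((((t:ℝ):ℂ)), (0:ℂ)) + w • ((0:ℂ), (1:ℂ)) = (((t:ℝ):ℂ), w) := by
                  rw [Prod.ext_iff]; constructor <;> simp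
                rw [this, mem_ball_zero_iff, Prod.norm_def]
                apply max_lt
                · show ‖((t : ℝ) : ℂ)‖ < 1
                  rw [htnorm]; linarith
                · exact lt_of_le_of_lt (mem_closedBall_zero_iff.1 hw')
                    (lt_of_le_of_lt hR2r hr1))
              rw [hcen, hfun] at h2
              exact h2)
            (B r)
            (by
              intro w hw
              have hwnorm : ‖w‖ = R2 := by
                have := mem_sphere_iff_norm.1 hw
                rwa [sub_zero] at this
              set ζ : ℂ := w / y.2 with hζdef
              have hζnorm : ‖ζ‖ = r := by
                rw [hζdef, norm_div, hwnorm, hR2_def, mul_div_assoc,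
                  div_self hy2n.ne', mul_one]
              have hζy : ζ • y = (ζ * y.1, w) := by
                rw [hsmul ζ, Prod.ext_iff]
                refine ⟨rfl, ?_⟩
                rw [hζdef]
                exact div_mul_cancel₀ w hy2
              have hnζy1 : ‖ζ * y.1‖ = t := by
                rw [norm_mul, hζnorm, ht_def]
              have hmemζ : (ζ * y.1, w) ∈ ball (0 : ℂ × ℂ) 1 := by
                rw [mem_ball_zero_iff, Prod.norm_def]
                exact max_lt (hnζy1 ▸ lt_of_le_of_lt htr hr1)
                  (hwnorm ▸ lt_of_le_of_lt hR2r hr1)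
              have heq1 : u (ζ • y) = u (((t : ℝ) : ℂ), w) := by
                rw [hζy, hrad _ _ hmemζ, hnζy1]
              have : u (((t : ℝ) : ℂ), w) ≤ B r := by
                rw [← heq1]
                exact le_biSup (fun ζ : ℂ => u (ζ • y)) (mem_closedBall_zero_iff.2 hζnorm.le)
              exact this)
          exact hBle p.2 (mem_closedBall_zero_iff.2 (hpw.trans hcrR))
        calc u p = u (p.1, p.2) := by rw [Prod.mk.eta]
          _ ≤ u (((t : ℝ) : ℂ), p.2) := hstepA
          _ ≤ B r := hstepB
      -- the upper comparison limit
      have hup : Tendsto (fun r : ℝ => (S (cc * r)).toReal / Real.log r) (𝓝[>] 0) (𝓝 0) := by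
        have h1 : Tendsto (fun r : ℝ => cc * r) (𝓝[>] (0:ℝ)) (𝓝[>] (0:ℝ)) := by
          apply tendsto_nhdsWithin_of_tendsto_nhds_of_eventually_within
          · have h2 : Tendsto (fun r : ℝ => cc * r) (𝓝 (0:ℝ)) (𝓝 (cc * 0)) :=
              (continuous_const.mul continuous_id).tendsto 0
            rw [mul_zero] at h2
            exact h2.mono_left nhdsWithin_le_nhds
          · filter_upwards [self_mem_nhdsWithin] with r hr
            exact mul_pos hcpos hr
        have h2 := hν.comp h1
        have h4 : Tendsto (fun r : ℝ => Real.log cc / Real.log r) (𝓝[>] (0:ℝ)) (𝓝 0) := by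
          have h5 : Tendsto (fun r : ℝ => -Real.log r) (𝓝[>] (0:ℝ)) atTop :=
            tendsto_neg_atTop_iff.2 Real.tendsto_log_nhdsGT_zero
          have h6 := h5.inv_tendsto_atTop
          have h7 : Tendsto (fun r : ℝ => -(-Real.log r)⁻¹) (𝓝[>] (0:ℝ)) (𝓝 (-0)) := h6.neg
          rw [neg_zero] at h7
          have h8 : Tendsto (fun r : ℝ => (Real.log r)⁻¹) (𝓝[>] (0:ℝ)) (𝓝 0) := by
            apply h7.congr
            intro r
            rw [inv_neg, neg_neg]
          have h9 := h8.const_mul (Real.log cc)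
          rw [mul_zero] at h9
          apply h9.congr
          intro r
          rw [div_eq_mul_inv]
        have h3 : Tendsto (fun r : ℝ => Real.log cc / Real.log r + 1) (𝓝[>] (0:ℝ)) (𝓝 1) := by
          have := h4.add (tendsto_const_nhds (x := (1:ℝ)))
          rwa [zero_add] at this
        have h5 := h2.mul h3
        rw [zero_mul] at h5
        apply Tendsto.congr' ?_ h5
        filter_upwards [Ioo_mem_nhdsGT one_pos] with r hr
        have hr0 : 0 < r := hr.1
        have hr1 : r < 1 := hr.2
        have hlogr : Real.log r ≠ 0 := ne_of_lt (Real.log_neg hr0 hr1)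
        have hccr1 : cc * r < 1 := by nlinarith
        have hlogcr : Real.log (cc * r) ≠ 0 :=
          ne_of_lt (Real.log_neg (mul_pos hcpos hr0) hccr1)
        have e1 : Real.log cc / Real.log r + 1 = Real.log (cc * r) / Real.log r := by
          rw [Real.log_mul hcpos.ne' hr0.ne', add_div, div_self hlogr]
        show ((fun r => (S r).toReal / Real.log r) ∘ fun r => cc * r) r *
            (Real.log cc / Real.log r + 1) = (S (cc * r)).toReal / Real.log r
        rw [Function.comp_apply, e1, div_mul_div_comm, mul_comm ((S (cc*r)).toReal)
          (Real.log (cc * r)), mul_comm (Real.log (cc * r)) (Real.log r)]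
        rw [mul_comm (Real.log r) (Real.log (cc * r))] at *
        rw [mul_div_mul_left _ _ hlogcr]
      -- squeeze
      refine tendsto_of_tendsto_of_tendsto_of_le_of_le' hν hup ?_ ?_
      · filter_upwards [Ioo_mem_nhdsGT (lt_min hr₁pos one_pos)] with r hr
        have hr0 : 0 < r := hr.1
        have hrr₁ : r < r₁ := lt_of_lt_of_le hr.2 (min_le_left _ _)
        have hr1 : r < 1 := lt_of_lt_of_le hr.2 (min_le_right _ _)
        have hStop : S r ≠ ⊤ := by
          intro h
          exact hr₁top (top_le_iff.1 (h ▸ hSmono r r₁ hrr₁.le))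
        have hScr_le : S (cc * r) ≤ B r := hkey r hr0 hrr₁ hr1
        have hBr_le : B r ≤ S r := hBS r
        have hBtop : B r ≠ ⊤ := fun h => hStop (top_le_iff.1 (h ▸ hBr_le))
        have hBbot : B r ≠ ⊥ := fun h => (hQ (cc*r) (mul_pos hcpos hr0))
          (le_bot_iff.1 (h ▸ hScr_le))
        have h2 : (B r).toReal ≤ (S r).toReal := EReal.toReal_le_toReal hBr_le hBbot hStop
        have hlogneg : Real.log r < 0 := Real.log_neg hr0 hr1
        rw [div_eq_mul_inv, div_eq_mul_inv]
        exact mul_le_mul_of_nonpos_right h2 (inv_nonpos.2 hlogneg.le)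
      · filter_upwards [Ioo_mem_nhdsGT (lt_min hr₁pos one_pos)] with r hr
        have hr0 : 0 < r := hr.1
        have hrr₁ : r < r₁ := lt_of_lt_of_le hr.2 (min_le_left _ _)
        have hr1 : r < 1 := lt_of_lt_of_le hr.2 (min_le_right _ _)
        have hStop : S r ≠ ⊤ := by
          intro h
          exact hr₁top (top_le_iff.1 (h ▸ hSmono r r₁ hrr₁.le))
        have hScr_le : S (cc * r) ≤ B r := hkey r hr0 hrr₁ hr1
        have hBr_le : B r ≤ S r := hBS r
        have hBtop : B r ≠ ⊤ := fun h => hStop (top_le_iff.1 (h ▸ hBr_le))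
        have hScr_bot : S (cc * r) ≠ ⊥ := hQ (cc*r) (mul_pos hcpos hr0)
        have h1 : (S (cc*r)).toReal ≤ (B r).toReal :=
          EReal.toReal_le_toReal hScr_le hScr_bot hBtop
        have hlogneg : Real.log r < 0 := Real.log_neg hr0 hr1
        rw [div_eq_mul_inv, div_eq_mul_inv]
        exact mul_le_mul_of_nonpos_right h1 (inv_nonpos.2 hlogneg.le)
  · -- the case where the sup is identically ⊤ near the origin
    push_neg at hP
    have hBtop : ∀ r : ℝ, 0 < r → r < 1 → B r = ⊤ := by
      intro r hr0 hr1
      set t : ℝ := r * ‖y.1‖ with ht_def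
      set R2 : ℝ := r * ‖y.2‖ with hR2_def
      have ht : 0 < t := mul_pos hr0 hy1n
      have hR2 : 0 < R2 := mul_pos hr0 hy2n
      have htr : t < r := by nlinarith
      have hR2r : R2 < r := by nlinarith
      set m0 : ℝ := min (1 - r) r with hm0
      have hm0pos : 0 < m0 := lt_min (by linarith) hr0
      set s : ℕ → ℝ := fun n => m0 / (n + 1) with hsdef
      have hspos : ∀ n : ℕ, 0 < s n := fun n => div_pos hm0pos (by positivity)
      have hsle : ∀ n : ℕ, s n ≤ m0 := fun n =>
        div_le_self hm0pos.le (by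
          have : (1:ℝ) ≤ (n:ℝ) + 1 := by
            have : (0:ℝ) ≤ (n:ℝ) := Nat.cast_nonneg n
            linarith
          exact this)
      have hm0le : m0 ≤ 1 - r := min_le_left _ _
      have hconstruct : ∀ n : ℕ, ∃ (aa : ℝ) (w : ℂ), |aa - t| ≤ s n ∧ |‖w‖ - R2| ≤ s n ∧
          0 ≤ aa ∧ u (((aa : ℝ) : ℂ), w) = ⊤ := by
        intro n
        have hSn : S (s n) = ⊤ := hP (s n) (hspos n)
        have hsub1 : closedBall (0 : ℂ × ℂ) (s n) ⊆ ball (0 : ℂ × ℂ) 1 := by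
          intro q hq
          rw [mem_ball_zero_iff]
          calc ‖q‖ ≤ s n := mem_closedBall_zero_iff.1 hq
            _ ≤ m0 := hsle n
            _ ≤ 1 - r := hm0le
            _ < 1 := by linarith
        obtain ⟨p, hpmem, hpmax⟩ := usc_exists_max (isCompact_closedBall (0 : ℂ × ℂ) (s n))
          ⟨0, mem_closedBall_self (hspos n).le⟩
          (usc_comp hpsh.1 continuous_id (fun q hq => hsub1 hq))
        have hptop : u p = ⊤ := by
          have h1 : S (s n) ≤ u p := iSup₂_le hpmax
          rw [hSn] at h1
          exact top_le_iff.1 h1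
        have hp1 : ‖p.1‖ ≤ s n := (norm_fst_le p).trans (mem_closedBall_zero_iff.1 hpmem)
        have hp2 : ‖p.2‖ ≤ s n := (norm_snd_le p).trans (mem_closedBall_zero_iff.1 hpmem)
        -- step 1 : spread ⊤ in the first coordinate
        have hdom1 : ∀ ζ : ℂ, ζ ∈ closedBall (0:ℂ) t → p + ζ • ((1:ℂ), (0:ℂ)) ∈
            ball (0 : ℂ × ℂ) 1 := by
          intro ζ hζ
          have h1 : p + ζ • ((1:ℂ), (0:ℂ)) = (p.1 + ζ, p.2) := by
            rw [Prod.ext_iff]; constructor <;> simp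
          rw [h1, mem_ball_zero_iff, Prod.norm_def]
          apply max_lt
          · calc ‖p.1 + ζ‖ ≤ ‖p.1‖ + ‖ζ‖ := norm_add_le _ _
              _ ≤ s n + t := add_le_add hp1 (mem_closedBall_zero_iff.1 hζ)
              _ ≤ (1 - r) + t := by linarith [hsle n, hm0le]
              _ < 1 := by linarith
          · calc ‖p.2‖ ≤ s n := hp2
              _ < 1 := by linarith [hsle n, hm0le]
        obtain ⟨ζ₁, hζ₁norm, hζ₁top⟩ := topSpread u hpsh p ((1:ℂ), (0:ℂ)) t ht hdom1 hptop
        have hp₁eq : p + ζ₁ • ((1:ℂ), (0:ℂ)) = (p.1 + ζ₁, p.2) := by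
          rw [Prod.ext_iff]; constructor <;> simp
        rw [hp₁eq] at hζ₁top
        have haa1 : |‖p.1 + ζ₁‖ - t| ≤ s n := by
          have h1 := abs_norm_sub_norm_le (p.1 + ζ₁) ζ₁
          rw [add_sub_cancel_right, hζ₁norm] at h1
          exact h1.trans hp1
        -- step 2 : spread ⊤ in the second coordinate
        have hn1 : ‖p.1 + ζ₁‖ ≤ t + s n := by
          have := abs_le.1 haa1
          linarith [this.2]
        have hdom2 : ∀ ζ : ℂ, ζ ∈ closedBall (0:ℂ) R2 →
            (p.1 + ζ₁, p.2) + ζ • ((0:ℂ), (1:ℂ)) ∈ ball (0 : ℂ × ℂ) 1 := by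
          intro ζ hζ
          have h1 : (p.1 + ζ₁, p.2) + ζ • ((0:ℂ), (1:ℂ)) = (p.1 + ζ₁, p.2 + ζ) := by
            rw [Prod.ext_iff]; constructor <;> simp
          rw [h1, mem_ball_zero_iff, Prod.norm_def]
          apply max_lt
          · calc ‖p.1 + ζ₁‖ ≤ t + s n := hn1
              _ ≤ t + (1 - r) := by linarith [hsle n, hm0le]
              _ < 1 := by linarith
          · calc ‖p.2 + ζ‖ ≤ ‖p.2‖ + ‖ζ‖ := norm_add_le _ _
              _ ≤ s n + R2 := add_le_add hp2 (mem_closedBall_zero_iff.1 hζ)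
              _ ≤ (1 - r) + R2 := by linarith [hsle n, hm0le]
              _ < 1 := by linarith
        obtain ⟨ζ₂, hζ₂norm, hζ₂top⟩ := topSpread u hpsh (p.1 + ζ₁, p.2) ((0:ℂ), (1:ℂ))
          R2 hR2 hdom2 hζ₁top
        have hqeq : (p.1 + ζ₁, p.2) + ζ₂ • ((0:ℂ), (1:ℂ)) = (p.1 + ζ₁, p.2 + ζ₂) := by
          rw [Prod.ext_iff]; constructor <;> simp
        rw [hqeq] at hζ₂top
        have hww1 : |‖p.2 + ζ₂‖ - R2| ≤ s n := by
          have h1 := abs_norm_sub_norm_le (p.2 + ζ₂) ζ₂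
          rw [add_sub_cancel_right, hζ₂norm] at h1
          exact h1.trans hp2
        -- radialize
        have hqmem : (p.1 + ζ₁, p.2 + ζ₂) ∈ ball (0 : ℂ × ℂ) 1 := by
          rw [mem_ball_zero_iff, Prod.norm_def]
          apply max_lt
          · calc ‖p.1 + ζ₁‖ ≤ t + s n := hn1
              _ ≤ t + (1 - r) := by linarith [hsle n, hm0le]
              _ < 1 := by linarith
          · have := abs_le.1 hww1
            calc ‖p.2 + ζ₂‖ ≤ R2 + s n := by linarith [this.2]
              _ ≤ R2 + (1 - r) := by linarith [hsle n, hm0le]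
              _ < 1 := by linarith
        have hradq := hrad (p.1 + ζ₁) (p.2 + ζ₂) hqmem
        refine ⟨‖p.1 + ζ₁‖, p.2 + ζ₂, haa1, hww1, norm_nonneg _, ?_⟩
        rw [← hradq]
        exact hζ₂top
      choose aa ww haa hww haa0 htopf using hconstruct
      have hslim : Tendsto s atTop (𝓝 0) := by
        have h1 := tendsto_one_div_add_atTop_nhds_zero_nat (𝕜 := ℝ)
        have h2 := h1.const_mul m0
        rw [mul_zero] at h2
        apply h2.congr
        intro n
        rw [hsdef, mul_one_div]
      have haalim : Tendsto aa atTop (𝓝 t) := by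
        apply tendsto_of_tendsto_of_tendsto_of_le_of_le (g := fun n => t - s n)
          (h := fun n => t + s n)
        · have := tendsto_const_nhds (x := t) (f := atTop (α := ℕ)) |>.sub hslim
          rwa [sub_zero] at this
        · have := tendsto_const_nhds (x := t) (f := atTop (α := ℕ)) |>.add hslim
          rwa [add_zero] at this
        · intro n
          show t - s n ≤ aa n
          have h1 := (abs_le.1 (haa n)).1; linarith
        · intro n
          show aa n ≤ t + s n
          have h1 := (abs_le.1 (haa n)).2; linarith
      have hwnormlim : Tendsto (fun n => ‖ww n‖) atTop (𝓝 R2) := by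
        apply tendsto_of_tendsto_of_tendsto_of_le_of_le (g := fun n => R2 - s n)
          (h := fun n => R2 + s n)
        · have := tendsto_const_nhds (x := R2) (f := atTop (α := ℕ)) |>.sub hslim
          rwa [sub_zero] at this
        · have := tendsto_const_nhds (x := R2) (f := atTop (α := ℕ)) |>.add hslim
          rwa [add_zero] at this
        · intro n
          show R2 - s n ≤ ‖ww n‖
          have h1 := (abs_le.1 (hww n)).1; linarith
        · intro n
          show ‖ww n‖ ≤ R2 + s n
          have h1 := (abs_le.1 (hww n)).2; linarith
      have hwmem : ∀ n : ℕ, ww n ∈ closedBall (0:ℂ) (R2 + 1) := by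
        intro n
        rw [mem_closedBall_zero_iff]
        have := abs_le.1 (hww n)
        have h1 : s n ≤ 1 := (hsle n).trans (hm0le.trans (by linarith))
        linarith [this.2]
      obtain ⟨winf, hwinfmem, φ, hφmono, hφtend⟩ :=
        (isCompact_closedBall (0:ℂ) (R2+1)).tendsto_subseq hwmem
      have hwinfnorm : ‖winf‖ = R2 := by
        have h1 : Tendsto (fun n => ‖ww (φ n)‖) atTop (𝓝 ‖winf‖) :=
          (continuous_norm.tendsto winf).comp hφtend
        have h2 : Tendsto (fun n => ‖ww (φ n)‖) atTop (𝓝 R2) :=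
          hwnormlim.comp hφmono.tendsto_atTop
        exact tendsto_nhds_unique h1 h2
      have htnorm : ‖((t : ℝ) : ℂ)‖ = t := by
        rw [Complex.norm_real, Real.norm_eq_abs, _root_.abs_of_pos ht]
      have hqinfmem : ((((t:ℝ):ℂ)), winf) ∈ ball (0 : ℂ × ℂ) 1 := by
        rw [mem_ball_zero_iff, Prod.norm_def]
        apply max_lt
        · show ‖((t : ℝ) : ℂ)‖ < 1
          rw [htnorm]; linarith
        · show ‖winf‖ < 1
          rw [hwinfnorm]; linarith
      have hqinftop : u ((((t:ℝ):ℂ)), winf) = ⊤ := by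
        by_contra hne
        have hlt : u ((((t:ℝ):ℂ)), winf) < ⊤ := lt_top_iff_ne_top.2 hne
        obtain ⟨bb, hb1, hb2⟩ := exists_between hlt
        have hev := hpsh.1 ((((t:ℝ):ℂ)), winf) hqinfmem bb hb1
        have hseq : Tendsto (fun n => (((aa (φ n) : ℝ) : ℂ), ww (φ n))) atTop
            (𝓝 ((((t:ℝ):ℂ)), winf)) := by
          apply Filter.Tendsto.prodMk_nhds
          · exact (Complex.continuous_ofReal.tendsto t).comp (haalim.comp hφmono.tendsto_atTop)
          · exact hφtend
        have hseqmem : ∀ n : ℕ, (((aa (φ n) : ℝ) : ℂ), ww (φ n)) ∈ ball (0 : ℂ × ℂ) 1 := by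
          intro n
          rw [mem_ball_zero_iff, Prod.norm_def]
          apply max_lt
          · have h1 := abs_le.1 (haa (φ n))
            have h2 : s (φ n) ≤ 1 - r := (hsle (φ n)).trans hm0le
            rw [Complex.norm_real, Real.norm_eq_abs, _root_.abs_of_nonneg (haa0 (φ n))]
            linarith [h1.2]
          · have h1 := abs_le.1 (hww (φ n))
            have h2 : s (φ n) ≤ 1 - r := (hsle (φ n)).trans hm0le
            linarith [h1.2]
        have htendwithin : Tendsto (fun n => (((aa (φ n) : ℝ) : ℂ), ww (φ n))) atTop
            (𝓝[ball (0 : ℂ × ℂ) 1] ((((t:ℝ):ℂ)), winf)) :=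
          tendsto_nhdsWithin_of_tendsto_nhds_of_eventually_within _ hseq
            (Eventually.of_forall hseqmem)
        have hevn := htendwithin.eventually hev
        obtain ⟨n, hn⟩ := hevn.exists
        rw [htopf (φ n)] at hn
        exact absurd (hn.trans hb2) (lt_irrefl ⊤)
      set ζ : ℂ := winf / y.2 with hζdef
      have hζnorm : ‖ζ‖ = r := by
        rw [hζdef, norm_div, hwinfnorm, hR2_def, mul_div_assoc, div_self hy2n.ne', mul_one]
      have hζy : ζ • y = (ζ * y.1, winf) := by
        rw [hsmul ζ, Prod.ext_iff]
        exact ⟨rfl, div_mul_cancel₀ winf hy2⟩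
      have hnζy1 : ‖ζ * y.1‖ = t := by rw [norm_mul, hζnorm, ht_def]
      have hmemζ : (ζ * y.1, winf) ∈ ball (0 : ℂ × ℂ) 1 := by
        rw [mem_ball_zero_iff, Prod.norm_def]
        apply max_lt
        · show ‖ζ * y.1‖ < 1
          rw [hnζy1]; linarith
        · show ‖winf‖ < 1
          rw [hwinfnorm]; linarith
      have hval : u (ζ • y) = ⊤ := by
        rw [hζy, hrad _ _ hmemζ, hnζy1]
        exact hqinftop
      apply top_le_iff.1
      rw [← hval]
      exact le_biSup (fun ζ : ℂ => u (ζ • y)) (mem_closedBall_zero_iff.2 hζnorm.le)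
    have hev : ∀ᶠ r in 𝓝[>] (0:ℝ), (B r).toReal / Real.log r = 0 := by
      filter_upwards [Ioo_mem_nhdsGT one_pos] with r hr
      rw [hBtop r hr.1 hr.2]
      simp
    exact Tendsto.congr' (hev.mono fun r h => h.symm) tendsto_const_nhds
end
end

section
/- Let u be plurisubharmonic on a polydisc D^n ⊂ ℂ^n, poly-radial (u(z₁,…,zₙ) = u(|z₁|,…,|zₙ|)), with u^{-1}(-∞) = {0}. Let ν_j be the Lelong number at 0 of the one-variable slice ζ ↦ u(0,…,0,ζ,0,…,0) of u along the j-th coordinate axis (ζ in the j-th position), which is finite. Then for every ε > 0 there is a polydisc around the origin on which u(z) ≥ max_j (ν_j + ε) log|z_j|. -/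
open Complex Metric MeasureTheory Real Filter Topology Set
open scoped ENNReal

noncomputable section

-- helpers
lemma erealToENN_eq_zero_of_nonpos {x : EReal} (hx : x ≤ 0) : erealToENN x = 0 := by
  have hxt : x ≠ ⊤ := by
    intro h; rw [h] at hx; exact absurd hx (by simp)
  rw [erealToENN, if_neg hxt, ENNReal.ofReal_eq_zero]
  induction x with
  | bot => simp
  | coe k => exact_mod_cast hx
  | top => exact absurd rfl hxt

lemma measurable_erealToENN : Measurable erealToENN := by
  unfold erealToENN
  refine Measurable.ite ?_ measurable_const ?_
  · exact measurableSet_eq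
  · exact measurable_ereal_toReal.ennreal_ofReal

lemma erealToENN_neg_coe (k : ℝ) : erealToENN (-(k : EReal)) = ENNReal.ofReal (-k) := by
  rw [erealToENN, if_neg (by simp [← EReal.coe_neg])]
  simp [← EReal.coe_neg]

lemma EReal.le_of_coe_mul_le {c : ℝ} (hc : 0 < c) {x y : EReal}
    (h : (c : EReal) * x ≤ (c : EReal) * y) : x ≤ y := by
  have hc0 : (0:EReal) < (c:EReal) := by exact_mod_cast hc
  have hct : (c : EReal) ≠ ⊤ := by simp
  have h1 : x ≤ ((c:EReal) * y) / (c:EReal) :=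
    (EReal.le_div_iff_mul_le hc0 hct).2 (by rwa [mul_comm])
  have h2 : ((c:EReal) * y) / (c:EReal) = y := by
    rw [mul_comm, ← EReal.mul_div_right, EReal.div_mul_cancel (ne_bot_of_gt hc0) hct hc0.ne']
  rwa [h2] at h1

lemma circleInt_const_nonpos {f : ℂ → EReal} {c : ℂ} {r : ℝ} {k : ℝ} (hk : k ≤ 0)
    (h : ∀ θ ∈ Set.Ioc (0:ℝ) (2*π), f (c + r * Complex.exp (θ * Complex.I)) = (k : EReal)) :
    circleInt f c r = ((2 * π * k : ℝ) : EReal) := by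
  have h1 : (∫⁻ θ in Set.Ioc (0:ℝ) (2*π),
      erealToENN (f (c + r * Complex.exp (θ * Complex.I)))) = 0 := by
    rw [setLIntegral_congr_fun measurableSet_Ioc
      (fun θ hθ => by
        rw [h θ hθ, erealToENN_eq_zero_of_nonpos (by exact_mod_cast hk)])]
    simp
  have h2 : (∫⁻ θ in Set.Ioc (0:ℝ) (2*π),
      erealToENN (-f (c + r * Complex.exp (θ * Complex.I)))) = ENNReal.ofReal (-(2*π*k)) := by
    rw [setLIntegral_congr_fun measurableSet_Ioc
      (fun θ hθ => by rw [h θ hθ, erealToENN_neg_coe])]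
    rw [setLIntegral_const, Real.volume_Ioc, ← ENNReal.ofReal_mul (by linarith)]
    ring_nf
  rw [circleInt]
  simp only [h1, h2]
  rw [EReal.coe_ennreal_zero, zero_sub, EReal.coe_ennreal_ofReal,
    max_eq_left (by nlinarith [Real.pi_pos]), ← EReal.coe_neg, neg_neg]

-- usc attains max on compact
lemma usc_max {α : Type*} [TopologicalSpace α] {F : α → EReal} {K : Set α}
    (hK : IsCompact K) (hne : K.Nonempty) (hF : UpperSemicontinuousOn F K) :
    ∃ x ∈ K, ∀ z ∈ K, F z ≤ F x := by
  by_contra hcon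
  push_neg at hcon
  choose! z hzK hz using hcon
  have hU : ∀ x ∈ K, {w | w ∈ K → F w < F (z x)} ∈ 𝓝 x := by
    intro x hx
    have := hF x hx (F (z x)) (hz x hx)
    rw [eventually_nhdsWithin_iff] at this
    exact this
  obtain ⟨t, htK, hcov⟩ := hK.elim_nhds_subcover _ hU
  have htne : t.Nonempty := by
    obtain ⟨x0, hx0⟩ := hne
    obtain ⟨x, hx, -⟩ := Set.mem_iUnion₂.1 (hcov hx0)
    exact ⟨x, hx⟩
  obtain ⟨b, hbt, hb⟩ := Finset.exists_max_image t (fun x => F (z x)) htne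
  have hzbK : z b ∈ K := hzK b (htK b hbt)
  obtain ⟨x, hxt, hxU⟩ := Set.mem_iUnion₂.1 (hcov hzbK)
  exact absurd (lt_of_lt_of_le (hxU hzbK) (hb x hxt)) (lt_irrefl _)




lemma le_erealToENN_neg {x : EReal} {m : ℝ} (hx : x ≤ (m : EReal)) :
    ENNReal.ofReal (-m) ≤ erealToENN (-x) := by
  induction x with
  | bot => simp [erealToENN]
  | coe ξ =>
      rw [← EReal.coe_neg, erealToENN, if_neg (by simp)]
      have hξ : ξ ≤ m := by exact_mod_cast hx
      simpa using ENNReal.ofReal_le_ofReal (by linarith)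
  | top => exact absurd hx (by simp)

lemma eq_of_erealToENN_neg_eq {x : EReal} {m : ℝ} (hm0 : m ≤ 0) (hx : x ≤ (m : EReal))
    (h : erealToENN (-x) = ENNReal.ofReal (-m)) : x = (m : EReal) := by
  induction x with
  | bot => exact absurd h.symm (by simp [erealToENN])
  | coe ξ =>
      have hξ : ξ ≤ m := by exact_mod_cast hx
      rw [erealToENN_neg_coe] at h
      have h2 : -ξ = -m := (ENNReal.ofReal_eq_ofReal_iff (by linarith) (by linarith)).1 h
      have h3 : ξ = m := by linarith
      exact_mod_cast h3
  | top => exact absurd hx (by simp)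

variable {n : ℕ}

def axisPt (j : Fin n) (ζ : ℂ) : Fin n → ℂ := fun i => if i = j then ζ else 0

lemma axisPt_mem_ball {j : Fin n} {ζ : ℂ} {ρ : ℝ} (h : ‖ζ‖ < ρ) :
    axisPt j ζ ∈ ball (0 : Fin n → ℂ) ρ := by
  have hρ : 0 < ρ := lt_of_le_of_lt (norm_nonneg _) h
  rw [mem_ball_zero_iff, pi_norm_lt_iff hρ]
  intro i
  by_cases hi : i = j <;> simp [axisPt, hi, h, hρ]

lemma zero_add_smul_axis (j : Fin n) (ζ : ℂ) :
    (0 : Fin n → ℂ) + ζ • (fun i => if i = j then (1:ℂ) else 0) = axisPt j ζ := by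
  funext i
  by_cases hi : i = j <;> simp [axisPt, hi]

lemma axisPt_ne_zero {j : Fin n} {ζ : ℂ} (h : ζ ≠ 0) : axisPt j ζ ≠ 0 := by
  intro hc
  exact h (by simpa [axisPt] using congrFun hc j)

lemma axisPt_zero (j : Fin n) : axisPt j (0:ℂ) = 0 := by
  funext i; by_cases hi : i = j <;> simp [axisPt, hi]

lemma axisPt_cont (j : Fin n) {p : ℝ → ℂ} (hp : Continuous p) :
    Continuous (fun x : ℝ => axisPt j (p x)) := by
  refine continuous_pi (fun i => ?_)
  by_cases hi : i = j <;> simp only [axisPt, hi, if_pos, if_true, if_neg, if_false]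
  · exact hp
  · exact continuous_const

section ctx

variable (u : (Fin n → ℂ) → EReal)
variable (hrad : ∀ z ∈ ball (0 : Fin n → ℂ) 1, u z = u (fun j => ((‖z j‖ : ℝ) : ℂ)))

include hrad in
lemma axis_rad {j : Fin n} {ζ : ℂ} (h : ‖ζ‖ < 1) :
    u (axisPt j ζ) = u (axisPt j ((‖ζ‖ : ℝ) : ℂ)) := by
  rw [hrad _ (axisPt_mem_ball h)]
  congr 1
  funext i
  by_cases hi : i = j <;> simp [axisPt, hi]

end ctx

section mono

variable (u : (Fin n → ℂ) → EReal)

lemma slice_mono (hpsh : PSHPiOn u (ball (0 : Fin n → ℂ) 1))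
    (hrad : ∀ z ∈ ball (0 : Fin n → ℂ) 1, u z = u (fun j => ((‖z j‖ : ℝ) : ℂ)))
    (hpole : ∀ z ∈ ball (0 : Fin n → ℂ) 1, (u z = ⊥ ↔ z = 0))
    {R : ℝ} (hR1 : R ≤ 1) (hneg : ∀ z ∈ ball (0 : Fin n → ℂ) R, u z ≤ 0)
    (j : Fin n) {t r : ℝ} (ht : 0 ≤ t) (htr : t ≤ r) (hrR : r < R) :
    u (axisPt j (t:ℂ)) ≤ u (axisPt j ((r:ℝ):ℂ)) := by
  rcases eq_or_lt_of_le htr with rfl | htlt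
  · exact le_rfl
  have hr0 : 0 < r := lt_of_le_of_lt ht htlt
  set F : ℝ → EReal := fun s => u (axisPt j ((s:ℝ):ℂ)) with hFdef
  have hnorm_coe : ∀ s : ℝ, 0 ≤ s → ‖((s:ℝ):ℂ)‖ = s := by
    intro s hs; rw [Complex.norm_real]; exact abs_of_nonneg hs
  -- upper semicontinuity of F on Icc 0 r
  have hFusc : UpperSemicontinuousOn F (Icc 0 r) := by
    intro x hx y hy
    have hmem : axisPt j ((x:ℝ):ℂ) ∈ ball (0 : Fin n → ℂ) 1 := by
      apply axisPt_mem_ball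
      rw [hnorm_coe x hx.1]
      exact lt_of_le_of_lt hx.2 (lt_of_lt_of_le hrR hR1)
    have h1 := hpsh.1 _ hmem y hy
    rw [(isOpen_ball).nhdsWithin_eq hmem] at h1
    exact (((axisPt_cont j Complex.continuous_ofReal).tendsto x).eventually h1).filter_mono
      nhdsWithin_le_nhds
  obtain ⟨s0, hs0K, hs0max⟩ := usc_max isCompact_Icc ⟨0, left_mem_Icc.2 hr0.le⟩ hFusc
  set M : EReal := F s0 with hMdef
  have hFt : F t ≤ M := hs0max t ⟨ht, htr⟩
  set S : Set ℝ := {s | s ∈ Icc 0 r ∧ M ≤ F s} with hSdef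
  have hSne : S.Nonempty := ⟨s0, hs0K, le_rfl⟩
  have hSbd : BddAbove S := ⟨r, fun s hs => hs.1.2⟩
  have hSclosed : IsClosed S := by
    rw [← isOpen_compl_iff, isOpen_iff_mem_nhds]
    intro x hx
    by_cases hxI : x ∈ Icc (0:ℝ) r
    · have hxlt : F x < M := by
        by_contra hcc; push_neg at hcc; exact hx ⟨hxI, hcc⟩
      have h1 := hFusc x hxI M hxlt
      rw [eventually_nhdsWithin_iff] at h1
      exact Filter.mem_of_superset h1
        (fun w hw hwS => absurd (hw hwS.1) (not_lt.2 hwS.2))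
    · exact Filter.mem_of_superset (isClosed_Icc.isOpen_compl.mem_nhds hxI)
        (fun w hw hwS => hw hwS.1)
  set s₁ := sSup S with hs₁def
  have hs₁S : s₁ ∈ S := hSclosed.csSup_mem hSne hSbd
  have hs₁I : s₁ ∈ Icc 0 r := hs₁S.1
  have hs₁r : s₁ = r := by
    by_contra hne'
    have hs₁lt : s₁ < r := lt_of_le_of_ne hs₁I.2 hne'
    -- M is a real number m ≤ 0
    have hrball : axisPt j ((r:ℝ):ℂ) ∈ ball (0 : Fin n → ℂ) 1 := by
      apply axisPt_mem_ball; rw [hnorm_coe r hr0.le]; exact lt_of_lt_of_le hrR hR1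
    have hFrbot : F r ≠ ⊥ := by
      intro h
      exact axisPt_ne_zero (Complex.ofReal_ne_zero.2 hr0.ne') ((hpole _ hrball).1 h)
    have hMbot : M ≠ ⊥ := by
      intro h
      exact hFrbot (le_bot_iff.1 (h ▸ hs0max r ⟨hr0.le, le_rfl⟩))
    have hM0 : M ≤ 0 := by
      apply hneg
      apply axisPt_mem_ball
      rw [hnorm_coe s0 hs0K.1]
      exact lt_of_le_of_lt hs0K.2 hrR
    have hMtop : M ≠ ⊤ := fun h => by rw [h] at hM0; exact absurd hM0 (by simp)
    obtain ⟨m, hm⟩ : ∃ m : ℝ, M = (m : EReal) := ⟨M.toReal, (EReal.coe_toReal hMtop hMbot).symm⟩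
    have hm0 : m ≤ 0 := by rw [hm] at hM0; exact_mod_cast hM0
    have hs₁0 : 0 < s₁ := by
      rcases lt_or_eq_of_le hs₁I.1 with h | h
      · exact h
      · exfalso
        have hF0 : F 0 = ⊥ := by
          show u (axisPt j ((0:ℝ):ℂ)) = ⊥
          rw [show (((0:ℝ):ℂ)) = (0:ℂ) by norm_num, axisPt_zero]
          exact (hpole 0 (mem_ball_self one_pos)).2 rfl
        have := hs₁S.2
        rw [← h, hF0] at this
        exact hMbot (le_bot_iff.1 this)
    set ρ := min s₁ (r - s₁) / 2 with hρdef
    have hρ0 : 0 < ρ := by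
      apply div_pos _ two_pos
      exact lt_min hs₁0 (by linarith)
    have hmin1 := min_le_left s₁ (r - s₁)
    have hmin2 := min_le_right s₁ (r - s₁)
    have hρs₁ : ρ < s₁ := by rw [hρdef]; linarith
    have hρr : s₁ + ρ < r := by rw [hρdef]; linarith
    have hFs₁ : F s₁ = M := le_antisymm (hs0max _ hs₁I) hs₁S.2
    -- the circle of radius ρ around s₁
    set q : ℝ → ℂ := fun θ => ((s₁:ℝ):ℂ) + (ρ:ℝ) * Complex.exp ((θ:ℝ) * Complex.I) with hqdef
    have hpnorm : ∀ θ : ℝ, ‖q θ‖ ≤ s₁ + ρ := by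
      intro θ
      calc ‖q θ‖ ≤ ‖((s₁:ℝ):ℂ)‖ + ‖(ρ:ℝ) * Complex.exp ((θ:ℝ) * Complex.I)‖ := norm_add_le _ _
        _ = s₁ + ρ := by
            rw [norm_mul, Complex.norm_exp_ofReal_mul_I, mul_one]
            rw [Complex.norm_real, Complex.norm_real, Real.norm_eq_abs, Real.norm_eq_abs,
              _root_.abs_of_nonneg hs₁0.le, _root_.abs_of_nonneg hρ0.le]
    have hpballR : ∀ θ : ℝ, axisPt j (q θ) ∈ ball (0 : Fin n → ℂ) R := by
      intro θ
      exact axisPt_mem_ball (lt_of_le_of_lt (hpnorm θ) (by linarith))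
    have hpball1 : ∀ θ : ℝ, axisPt j (q θ) ∈ ball (0 : Fin n → ℂ) 1 := by
      intro θ
      exact axisPt_mem_ball (lt_of_le_of_lt (hpnorm θ) (by linarith))
    have hpnorm1 : ∀ θ : ℝ, ‖q θ‖ < 1 := fun θ => lt_of_le_of_lt (hpnorm θ) (by linarith)
    -- the submean inequality
    have hdom : ∀ ζ ∈ closedBall ((s₁:ℝ):ℂ) ρ,
        (0 : Fin n → ℂ) + ζ • (fun i => if i = j then (1:ℂ) else 0) ∈ ball (0 : Fin n → ℂ) 1 := by
      intro ζ hζ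
      rw [zero_add_smul_axis]
      apply axisPt_mem_ball
      have h1 : ‖ζ - ((s₁:ℝ):ℂ)‖ ≤ ρ := by
        rw [mem_closedBall, Complex.dist_eq] at hζ
        exact hζ
      have h2 : ‖ζ‖ ≤ ‖((s₁:ℝ):ℂ)‖ + ‖ζ - ((s₁:ℝ):ℂ)‖ := by
        calc ‖ζ‖ = ‖((s₁:ℝ):ℂ) + (ζ - ((s₁:ℝ):ℂ))‖ := by ring_nf
          _ ≤ _ := norm_add_le _ _
      rw [Complex.norm_real, Real.norm_eq_abs, _root_.abs_of_nonneg hs₁0.le] at h2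
      have : ‖ζ‖ ≤ s₁ + ρ := by linarith
      linarith
    have hsub := hpsh.2 0 (fun i => if i = j then (1:ℂ) else 0) ((s₁:ℝ):ℂ) ρ hρ0 hdom
    simp only [zero_add_smul_axis] at hsub
    simp only [circleInt] at hsub
    have hLHS : u (axisPt j ((s₁:ℝ):ℂ)) = (m : EReal) := by
      rw [show u (axisPt j ((s₁:ℝ):ℂ)) = F s₁ from rfl, hFs₁, hm]
    rw [hLHS] at hsub
    set B : ℝ≥0∞ := ∫⁻ θ in Set.Ioc (0:ℝ) (2*π),
        erealToENN (-(u (axisPt j (((s₁:ℝ):ℂ) + (ρ:ℝ) * Complex.exp ((θ:ℝ) * Complex.I))))) with hBdef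
    have h_pos : (∫⁻ θ in Set.Ioc (0:ℝ) (2*π),
        erealToENN (u (axisPt j (((s₁:ℝ):ℂ) + (ρ:ℝ) * Complex.exp ((θ:ℝ) * Complex.I))))) = 0 := by
      rw [setLIntegral_congr_fun measurableSet_Ioc
        (fun θ _ => erealToENN_eq_zero_of_nonpos (hneg _ (hpballR θ)))]
      simp
    rw [h_pos] at hsub
    rw [EReal.coe_ennreal_zero, zero_sub] at hsub
    -- hsub : ↑(2π) * ↑m ≤ -B.toEReal
    have hcoe : ((2*π:ℝ):EReal) * (m:EReal) = (((2*π*m):ℝ):EReal) := by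
      rw [← EReal.coe_mul]
    rw [hcoe] at hsub
    have hB1 : (B : EReal) ≤ ((-(2*π*m):ℝ) : EReal) := by
      rw [EReal.coe_neg]
      exact EReal.le_neg_of_le_neg hsub
    have hBle : B ≤ ENNReal.ofReal (-(2*π*m)) := by
      rw [← EReal.coe_ennreal_le_coe_ennreal_iff, EReal.coe_ennreal_ofReal]
      exact hB1.trans (by exact_mod_cast le_max_left _ _)
    -- pointwise lower bound
    have hpleM : ∀ θ : ℝ, u (axisPt j (q θ)) ≤ (m : EReal) := by
      intro θ
      rw [axis_rad u hrad (hpnorm1 θ), ← hm]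
      exact hs0max ‖q θ‖ ⟨norm_nonneg _, (hpnorm θ).trans (by linarith)⟩
    have hlow : ∀ θ ∈ Set.Ioc (0:ℝ) (2*π),
        ENNReal.ofReal (-m) ≤ erealToENN (-(u (axisPt j (q θ)))) :=
      fun θ _ => le_erealToENN_neg (hpleM θ)
    -- measurability
    have husc : UpperSemicontinuous (fun θ : ℝ => u (axisPt j (q θ))) := by
      intro x y hy
      have h1 := hpsh.1 _ (hpball1 x) y hy
      rw [(isOpen_ball).nhdsWithin_eq (hpball1 x)] at h1
      have hqc : Continuous q := by
        apply continuous_const.add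
        exact continuous_const.mul (Complex.continuous_exp.comp
          (Complex.continuous_ofReal.mul continuous_const))
      exact (((axisPt_cont j hqc).tendsto x).eventually h1)
    have hGm : Measurable (fun θ : ℝ => erealToENN (-(u (axisPt j (q θ))))) := by
      exact measurable_erealToENN.comp (continuous_neg.measurable.comp husc.measurable)
    -- integral comparison forces a.e. equality
    have hμIoc : volume (Set.Ioc (0:ℝ) (2*π)) = ENNReal.ofReal (2*π) := by
      rw [Real.volume_Ioc]; norm_num
    have hlowint : (∫⁻ _ in Set.Ioc (0:ℝ) (2*π), ENNReal.ofReal (-m)) = ENNReal.ofReal (-(2*π*m)) := by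
      rw [setLIntegral_const, hμIoc, ← ENNReal.ofReal_mul (by linarith)]
      ring_nf
    have hBB : B ≤ ∫⁻ _ in Set.Ioc (0:ℝ) (2*π), ENNReal.ofReal (-m) := by
      rw [hlowint]; exact hBle
    have hael : (fun _ : ℝ => ENNReal.ofReal (-m)) ≤ᵐ[volume.restrict (Set.Ioc (0:ℝ) (2*π))]
        (fun θ => erealToENN (-(u (axisPt j (q θ))))) := by
      rw [Filter.EventuallyLE, ae_restrict_iff' measurableSet_Ioc]
      exact ae_of_all _ hlow
    have hfin : (∫⁻ _ in Set.Ioc (0:ℝ) (2*π), ENNReal.ofReal (-m)) ≠ ⊤ := by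
      rw [hlowint]; exact ENNReal.ofReal_ne_top
    have hsubint := lintegral_sub measurable_const hfin hael
    have hz : (∫⁻ θ in Set.Ioc (0:ℝ) (2*π),
        (erealToENN (-(u (axisPt j (q θ)))) - ENNReal.ofReal (-m))) = 0 := by
      rw [hsubint]
      exact tsub_eq_zero_of_le hBB
    have hae0 := (lintegral_eq_zero_iff (hGm.sub measurable_const)).1 hz
    have h2π1 : (1:ℝ) ≤ 2*π := by nlinarith [Real.pi_gt_three]
    obtain ⟨θ, hθmem, hθeq⟩ : ∃ θ ∈ Set.Ioc (0:ℝ) 1,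
        erealToENN (-(u (axisPt j (q θ)))) - ENNReal.ofReal (-m) = 0 := by
      by_contra hc
      push_neg at hc
      have hsubset : Set.Ioc (0:ℝ) 1 ⊆
          {θ : ℝ | ¬ ((fun θ : ℝ => erealToENN (-(u (axisPt j (q θ)))) - ENNReal.ofReal (-m)) θ
            = (fun _ : ℝ => (0:ℝ≥0∞)) θ)} := by
        intro θ hθ h'
        exact hc θ hθ h'
      have hnull : (volume.restrict (Set.Ioc (0:ℝ) (2*π)))
          {θ : ℝ | ¬ ((fun θ : ℝ => erealToENN (-(u (axisPt j (q θ)))) - ENNReal.ofReal (-m)) θ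
            = (fun _ : ℝ => (0:ℝ≥0∞)) θ)} = 0 := hae0
      have hle : (volume.restrict (Set.Ioc (0:ℝ) (2*π))) (Set.Ioc (0:ℝ) 1) ≤
          (volume.restrict (Set.Ioc (0:ℝ) (2*π)))
          {θ : ℝ | ¬ ((fun θ : ℝ => erealToENN (-(u (axisPt j (q θ)))) - ENNReal.ofReal (-m)) θ
            = (fun _ : ℝ => (0:ℝ≥0∞)) θ)} := measure_mono hsubset
      rw [hnull] at hle
      have : (volume.restrict (Set.Ioc (0:ℝ) (2*π))) (Set.Ioc (0:ℝ) 1) = ENNReal.ofReal 1 := by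
        rw [Measure.restrict_apply measurableSet_Ioc, Set.Ioc_inter_Ioc]
        simp only [sup_idem, min_eq_left h2π1]
        rw [Real.volume_Ioc]
        norm_num
      rw [this] at hle
      simp at hle
    have hθIoc : θ ∈ Set.Ioc (0:ℝ) (2*π) := ⟨hθmem.1, hθmem.2.trans h2π1⟩
    have hGθ : erealToENN (-(u (axisPt j (q θ)))) = ENNReal.ofReal (-m) :=
      le_antisymm (tsub_eq_zero_iff_le.1 hθeq) (hlow θ hθIoc)
    have hθm : u (axisPt j (q θ)) = (m : EReal) :=
      eq_of_erealToENN_neg_eq hm0 (hpleM θ) hGθ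
    have hFq : F ‖q θ‖ = M := by
      rw [show F ‖q θ‖ = u (axisPt j ((‖q θ‖:ℝ):ℂ)) from rfl, ← axis_rad u hrad (hpnorm1 θ), hθm, hm]
    -- ‖q θ‖ > s₁
    have hRe : s₁ + ρ * Real.cos θ ≤ ‖q θ‖ := by
      have h1 : (q θ).re = s₁ + ρ * Real.cos θ := by
        simp [hqdef, Complex.add_re, Complex.mul_re, Complex.exp_ofReal_mul_I_re]
      rw [← h1]
      exact Complex.re_le_norm _
    have hθcos : Real.cos 1 ≤ Real.cos θ :=
      Real.cos_le_cos_of_nonneg_of_le_pi hθmem.1.le (by nlinarith [Real.pi_gt_three]) hθmem.2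
    have hcos1 : 0 < Real.cos 1 :=
      Real.cos_pos_of_mem_Ioo ⟨by nlinarith [Real.pi_gt_three], by nlinarith [Real.pi_gt_three]⟩
    have hgt : s₁ < ‖q θ‖ := lt_of_lt_of_le (by nlinarith) hRe
    have hmemS : ‖q θ‖ ∈ S := ⟨⟨norm_nonneg _, (hpnorm θ).trans (by linarith)⟩, le_of_eq hFq.symm⟩
    exact absurd (le_csSup hSbd hmemS) (not_le.2 hgt)
  have h2 := hs₁S.2
  rw [hs₁r] at h2
  exact hFt.trans h2

end mono

lemma axis_le (u : (Fin n → ℂ) → EReal) (hpsh : PSHPiOn u (ball (0 : Fin n → ℂ) 1))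
    (hrad : ∀ z ∈ ball (0 : Fin n → ℂ) 1, u z = u (fun j => ((‖z j‖ : ℝ) : ℂ)))
    {R : ℝ} (hR1 : R ≤ 1) (hneg : ∀ z ∈ ball (0 : Fin n → ℂ) R, u z ≤ 0)
    (j : Fin n) {z : Fin n → ℂ} (hz : z ∈ ball (0 : Fin n → ℂ) R)
    (hzbot : u z ≠ ⊥) :
    u (axisPt j (z j)) ≤ u z := by
  have hz1 : z ∈ ball (0 : Fin n → ℂ) 1 := ball_subset_ball hR1 hz
  have hK : u z ≤ 0 := hneg z hz
  have hKtop : u z ≠ ⊤ := fun h => by rw [h] at hK; exact absurd hK (by simp)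
  obtain ⟨k, hk⟩ : ∃ k : ℝ, u z = (k : EReal) := ⟨(u z).toReal, (EReal.coe_toReal hKtop hzbot).symm⟩
  have hk0 : k ≤ 0 := by rw [hk] at hK; exact_mod_cast hK
  set a : Fin n → ℂ := fun i => if i = j then z j else 0 with hadef
  set b : Fin n → ℂ := fun i => if i = j then 0 else z i with hbdef
  have hzn : ∀ i, ‖z i‖ < 1 := by
    intro i
    have h1 := norm_le_pi_norm z i
    rw [mem_ball_zero_iff] at hz1
    linarith
  have hwn : ∀ ζ : ℂ, ‖ζ‖ ≤ 1 → ∀ i, ‖(a + ζ • b) i‖ = if i = j then ‖z j‖ else ‖ζ‖ * ‖z i‖ := by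
    intro ζ hζ i
    by_cases hi : i = j <;> simp [hadef, hbdef, hi]
  have hdom : ∀ ζ ∈ closedBall (0:ℂ) 1, a + ζ • b ∈ ball (0 : Fin n → ℂ) 1 := by
    intro ζ hζ
    rw [mem_closedBall_zero_iff] at hζ
    rw [mem_ball_zero_iff, pi_norm_lt_iff one_pos]
    intro i
    rw [hwn ζ hζ i]
    by_cases hi : i = j
    · rw [if_pos hi]; exact hzn j
    · rw [if_neg hi]
      calc ‖ζ‖ * ‖z i‖ ≤ 1 * ‖z i‖ := mul_le_mul_of_nonneg_right hζ (norm_nonneg _)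
        _ = ‖z i‖ := one_mul _
        _ < 1 := hzn i
  have hsub := hpsh.2 a b 0 1 one_pos hdom
  have ha : a + (0:ℂ) • b = axisPt j (z j) := by
    funext i; by_cases hi : i = j <;> simp [hadef, hbdef, axisPt, hi]
  rw [ha] at hsub
  have hconst : ∀ θ ∈ Set.Ioc (0:ℝ) (2*π),
      (fun ζ => u (a + ζ • b)) ((0:ℂ) + ((1:ℝ):ℂ) * Complex.exp ((θ:ℝ) * Complex.I))
        = (k : EReal) := by
    intro θ _
    have hsimp : (0:ℂ) + ((1:ℝ):ℂ) * Complex.exp ((θ:ℝ) * Complex.I)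
        = Complex.exp ((θ:ℝ) * Complex.I) := by simp
    rw [hsimp]
    set e := Complex.exp ((θ:ℝ) * Complex.I) with hedef
    have he : ‖e‖ = 1 := Complex.norm_exp_ofReal_mul_I θ
    have hmem : a + e • b ∈ ball (0 : Fin n → ℂ) 1 :=
      hdom e (by rw [mem_closedBall_zero_iff, he])
    have h1 : u (a + e • b) = u (fun i => ((‖(a + e • b) i‖ : ℝ) : ℂ)) := hrad _ hmem
    have h2 : u z = u (fun i => ((‖z i‖ : ℝ) : ℂ)) := hrad _ hz1
    have h3 : (fun i => ((‖(a + e • b) i‖ : ℝ) : ℂ)) = (fun i => ((‖z i‖ : ℝ) : ℂ)) := by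
      funext i
      rw [hwn e he.le i]
      by_cases hi : i = j
      · rw [if_pos hi, hi]
      · rw [if_neg hi, he, one_mul]
    show u (a + e • b) = (k : EReal)
    rw [h1, h3, ← h2, hk]
  rw [circleInt_const_nonpos hk0 hconst] at hsub
  rw [hk]
  have hpi : (0:ℝ) < 2*π := by positivity
  apply EReal.le_of_coe_mul_le hpi
  rw [EReal.coe_mul] at hsub
  exact hsub

lemma EReal.toReal_nonpos' {x : EReal} (h : x ≤ 0) : x.toReal ≤ 0 := by
  induction x with
  | bot => simp
  | coe ξ => exact_mod_cast h
  | top => exact absurd h (by simp)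


/-- a poly-radial psh function on the unit polydisc with single pole at `0`
is bounded below, near `0`, by `max_j (ν_j + ε) log|z_j|`, where `ν_j` is the Lelong number
of the slice along the `j`-th axis. -/
theorem polyradial_log_minorant {n : ℕ} (u : (Fin n → ℂ) → EReal)
    (hpsh : PSHPiOn u (ball (0 : Fin n → ℂ) 1))
    (hrad : ∀ z ∈ ball (0 : Fin n → ℂ) 1, u z = u (fun j => ((‖z j‖ : ℝ) : ℂ)))
    (hpole : ∀ z ∈ ball (0 : Fin n → ℂ) 1, (u z = ⊥ ↔ z = 0))
    (ν : Fin n → ℝ)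
    (hν : ∀ j : Fin n, HasLelong (fun ζ : ℂ => u (fun i => if i = j then ζ else 0)) 0 (ν j)) :
    ∀ ε : ℝ, 0 < ε → ∃ ρ : ℝ, 0 < ρ ∧ ∀ z ∈ ball (0 : Fin n → ℂ) ρ,
      (⨆ j : Fin n, ((ν j + ε : ℝ) : EReal) * elog (z j)) ≤ u z := by
  intro ε hε
  rcases Nat.eq_zero_or_pos n with hn | hn
  · haveI : IsEmpty (Fin n) := ⟨fun j => absurd j.2 (by omega)⟩
    exact ⟨1, one_pos, fun z _ => by rw [iSup_of_empty]; exact bot_le⟩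
  haveI : Nonempty (Fin n) := ⟨⟨0, hn⟩⟩
  -- a ball where u < 0
  have h0mem : (0 : Fin n → ℂ) ∈ ball (0 : Fin n → ℂ) 1 := mem_ball_self one_pos
  have hu0 : u 0 = ⊥ := (hpole 0 h0mem).2 rfl
  have husc0 := hpsh.1 0 h0mem 0 (by show u 0 < 0; rw [hu0]; exact bot_lt_iff_ne_bot.2 (by simp))
  rw [(isOpen_ball).nhdsWithin_eq h0mem, Metric.eventually_nhds_iff] at husc0
  obtain ⟨δ, hδ0, hδ⟩ := husc0
  set R := min δ 1 with hRdef
  have hR0 : 0 < R := lt_min hδ0 one_pos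
  have hR1 : R ≤ 1 := min_le_right _ _
  have hneg : ∀ z ∈ ball (0 : Fin n → ℂ) R, u z ≤ 0 := by
    intro z hz
    rw [mem_ball] at hz
    exact (hδ (lt_of_lt_of_le hz (min_le_left _ _))).le
  -- properties of sup along slices
  have hsuple : ∀ (j : Fin n) (r : ℝ), 0 < r → r < R →
      supBall (fun ζ : ℂ => u (fun i => if i = j then ζ else 0)) 0 r
        ≤ u (axisPt j ((r:ℝ):ℂ)) := by
    intro j r hr0 hrR
    apply iSup₂_le
    intro ζ hζ
    rw [mem_closedBall_zero_iff] at hζ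
    have hζ1 : ‖ζ‖ < 1 := lt_of_le_of_lt hζ (lt_of_lt_of_le hrR hR1)
    show u (axisPt j ζ) ≤ u (axisPt j ((r:ℝ):ℂ))
    rw [axis_rad u hrad hζ1]
    exact slice_mono u hpsh hrad hpole hR1 hneg j (norm_nonneg ζ) hζ hrR
  have hsupneg : ∀ (j : Fin n) (r : ℝ), 0 < r → r < R →
      supBall (fun ζ : ℂ => u (fun i => if i = j then ζ else 0)) 0 r ≤ 0 := by
    intro j r hr0 hrR
    refine (hsuple j r hr0 hrR).trans ?_
    apply hneg
    apply axisPt_mem_ball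
    rw [Complex.norm_real, Real.norm_eq_abs, _root_.abs_of_nonneg hr0.le]
    exact hrR
  have hsupbot : ∀ (j : Fin n) (r : ℝ), 0 < r → r < 1 →
      supBall (fun ζ : ℂ => u (fun i => if i = j then ζ else 0)) 0 r ≠ ⊥ := by
    intro j r hr0 hr1 hbot
    have hmem : ((r:ℝ):ℂ) ∈ closedBall (0:ℂ) r := by
      rw [mem_closedBall_zero_iff, Complex.norm_real, Real.norm_eq_abs,
        _root_.abs_of_nonneg hr0.le]
    have hle : u (fun i => if i = j then ((r:ℝ):ℂ) else 0)
        ≤ supBall (fun ζ : ℂ => u (fun i => if i = j then ζ else 0)) 0 r := by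
      exact le_iSup₂ (f := fun ζ (_ : ζ ∈ closedBall (0:ℂ) r) =>
        u (fun i => if i = j then ζ else 0)) ((r:ℝ):ℂ) hmem
    rw [hbot, le_bot_iff] at hle
    have hball : axisPt j ((r:ℝ):ℂ) ∈ ball (0 : Fin n → ℂ) 1 := by
      apply axisPt_mem_ball
      rw [Complex.norm_real, Real.norm_eq_abs, _root_.abs_of_nonneg hr0.le]
      exact hr1
    exact axisPt_ne_zero (Complex.ofReal_ne_zero.2 hr0.ne') ((hpole _ hball).1 hle)
  -- Lelong numbers are nonnegative
  have hνnn : ∀ j : Fin n, 0 ≤ ν j := by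
    intro j
    refine ge_of_tendsto (hν j) ?_
    filter_upwards [Ioo_mem_nhdsGT (lt_min hR0 one_pos)] with r hr
    obtain ⟨hr0, hrlt⟩ := hr
    have hrR : r < R := lt_of_lt_of_le hrlt (min_le_left _ _)
    have hr1 : r < 1 := lt_of_lt_of_le hrlt (min_le_right _ _)
    have hlog : Real.log r < 0 := Real.log_neg hr0 hr1
    have htr : (supBall (fun ζ : ℂ => u (fun i => if i = j then ζ else 0)) 0 r).toReal ≤ 0 :=
      EReal.toReal_nonpos' (hsupneg j r hr0 hrR)
    exact div_nonneg_iff.2 (Or.inr ⟨htr, hlog.le⟩)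
  -- key pointwise lower bound on slices
  have hkey : ∀ j : Fin n, ∃ d > 0, ∀ s : ℝ, 0 < s → s < d →
      (((ν j + ε) * Real.log s : ℝ) : EReal) ≤ u (axisPt j ((s:ℝ):ℂ)) := by
    intro j
    have hev := (hν j).eventually_lt_const (show ν j < ν j + ε by linarith)
    have hev2 : ∀ᶠ r in 𝓝[>] (0:ℝ), r ∈ Ioo (0:ℝ) (min R 1) :=
      Ioo_mem_nhdsGT (lt_min hR0 one_pos)
    obtain ⟨v, hvmem, hv⟩ := ((hev.and hev2).exists_mem)
    rw [mem_nhdsGT_iff_exists_Ioo_subset] at hvmem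
    obtain ⟨c, hc, hsub⟩ := hvmem
    refine ⟨c, hc, fun s hs0 hsc => ?_⟩
    obtain ⟨hratio, hsR'⟩ := hv s (hsub ⟨hs0, hsc⟩)
    have hsR : s < R := lt_of_lt_of_le hsR'.2 (min_le_left _ _)
    have hs1 : s < 1 := lt_of_lt_of_le hsR'.2 (min_le_right _ _)
    have hlog : Real.log s < 0 := Real.log_neg hs0 hs1
    have hmul : (ν j + ε) * Real.log s
        < (supBall (fun ζ : ℂ => u (fun i => if i = j then ζ else 0)) 0 s).toReal :=
      (div_lt_iff_of_neg hlog).1 hratio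
    have hbot := hsupbot j s hs0 hs1
    have htop : supBall (fun ζ : ℂ => u (fun i => if i = j then ζ else 0)) 0 s ≠ ⊤ := by
      intro h
      have h2 := hsupneg j s hs0 hsR
      rw [h] at h2
      exact absurd h2 (by simp)
    calc (((ν j + ε) * Real.log s : ℝ) : EReal)
        ≤ ((supBall (fun ζ : ℂ => u (fun i => if i = j then ζ else 0)) 0 s).toReal : EReal) := by
          exact_mod_cast hmul.le
      _ = supBall (fun ζ : ℂ => u (fun i => if i = j then ζ else 0)) 0 s :=
          EReal.coe_toReal htop hbot
      _ ≤ u (axisPt j ((s:ℝ):ℂ)) := hsuple j s hs0 hsR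
  choose d hd0 hdkey using hkey
  set ρ := min (R/2) ((Finset.univ : Finset (Fin n)).inf' Finset.univ_nonempty d) with hρdef
  have hρ0 : 0 < ρ := by
    apply lt_min (by linarith)
    rw [Finset.lt_inf'_iff]
    exact fun i _ => hd0 i
  refine ⟨ρ, hρ0, fun z hz => ?_⟩
  have hznorm : ‖z‖ < ρ := mem_ball_zero_iff.1 hz
  have hρR2 : ρ ≤ R/2 := min_le_left _ _
  have hzR : z ∈ ball (0 : Fin n → ℂ) R := by
    rw [mem_ball_zero_iff]
    linarith
  have hz1 : z ∈ ball (0 : Fin n → ℂ) 1 := ball_subset_ball hR1 hzR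
  apply iSup_le
  intro j
  by_cases hzj0 : z j = 0
  · rw [hzj0, elog, if_pos rfl, EReal.coe_mul_bot_of_pos (by linarith [hνnn j])]
    exact bot_le
  · have hs0 : 0 < ‖z j‖ := norm_pos_iff.2 hzj0
    have hzj : ‖z j‖ ≤ ‖z‖ := norm_le_pi_norm z j
    have hsd : ‖z j‖ < d j := by
      have h1 : ρ ≤ (Finset.univ : Finset (Fin n)).inf' Finset.univ_nonempty d :=
        min_le_right _ _
      have h2 : (Finset.univ : Finset (Fin n)).inf' Finset.univ_nonempty d ≤ d j :=
        Finset.inf'_le _ (Finset.mem_univ j)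
      linarith
    have h1 := hdkey j ‖z j‖ hs0 hsd
    have hzj1 : ‖z j‖ < 1 := by linarith
    have h2 : u (axisPt j ((‖z j‖:ℝ):ℂ)) = u (axisPt j (z j)) := (axis_rad u hrad hzj1).symm
    have hzbot : u z ≠ ⊥ := fun hb => hzj0 (by simpa using congrFun ((hpole z hz1).1 hb) j)
    have h3 : u (axisPt j (z j)) ≤ u z := axis_le u hpsh hrad hR1 hneg j hzR hzbot
    have helog : ((ν j + ε : ℝ) : EReal) * elog (z j)
        = (((ν j + ε) * Real.log ‖z j‖ : ℝ) : EReal) := by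
      rw [elog, if_neg hzj0, ← EReal.coe_mul]
    rw [helog]
    exact (h1.trans (le_of_eq h2)).trans h3
end
end
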